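/- arXiv:2208.01010 — 9 statements merged into one kernel-verified Lean document; each statement's English description precedes it below -/
import Mathlib

section
/- If α₁ ≺ α₂ ≺ ⋯ ≺ α_ℓ are binary sequences in {0,1}^N in lexicographic order, then there is a unique index i ∈ {1,…,ℓ−1} achieving the minimum of δ(α_i, α_{i+1}). -/
/-- For distinct binary sequences, the first position where they differ. -/
noncomputable def delta {N : ℕ} (a b : Fin N → Bool) : ℕ :=
  sInf {i : ℕ | ∃ h : i < N, a ⟨i, h⟩ ≠ b ⟨i, h⟩}

/-- The lexicographic order on binary sequences. -/
def lexLt {N : ℕ} (a b : Fin N → Bool) : Prop :=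
  ∃ h : delta a b < N, a ⟨delta a b, h⟩ < b ⟨delta a b, h⟩

lemma delta_agree {N : ℕ} {a b : Fin N → Bool} {i : ℕ} (h : i < N) (hi : i < delta a b) :
    a ⟨i, h⟩ = b ⟨i, h⟩ := by
  by_contra hne
  have : delta a b ≤ i :=
    Nat.sInf_le (s := {i : ℕ | ∃ h : i < N, a ⟨i, h⟩ ≠ b ⟨i, h⟩}) ⟨h, hne⟩
  omega

lemma step_true {N : ℕ} {a b : Fin N → Bool} (hab : lexLt a b) {m : ℕ} (hm : m < N)
    (hle : m ≤ delta a b) (ha : a ⟨m, hm⟩ = true) : b ⟨m, hm⟩ = true := by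
  rcases lt_or_eq_of_le hle with h | h
  · rw [← delta_agree hm h]; exact ha
  · obtain ⟨hN, hlt⟩ := hab
    rw [Bool.lt_iff] at hlt
    have he : (⟨m, hm⟩ : Fin N) = ⟨delta a b, hN⟩ := Fin.ext h
    rw [he, hlt.1] at ha
    exact absurd ha (by simp)

/-- If `α 0 ≺ α 1 ≺ ⋯ ≺ α (ℓ-1)`, then there is a unique index achieving the minimum
of the consecutive values `δ(α i, α (i+1))`. -/
theorem delta_min_unique {N ℓ : ℕ} (α : ℕ → Fin N → Bool) (hℓ : 2 ≤ ℓ)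
    (hchain : ∀ i, i + 1 < ℓ → lexLt (α i) (α (i + 1))) :
    ∃! i : ℕ, i + 1 < ℓ ∧
      ∀ j, j + 1 < ℓ → delta (α i) (α (i + 1)) ≤ delta (α j) (α (j + 1)) := by
  -- existence of a minimizer
  obtain ⟨i, hi, hmin⟩ := Finset.exists_min_image (Finset.range (ℓ - 1))
    (fun k => delta (α k) (α (k + 1))) ⟨0, by simp; omega⟩
  rw [Finset.mem_range] at hi
  have hi' : i + 1 < ℓ := by omega
  refine ⟨i, ⟨hi', fun j hj => hmin j (Finset.mem_range.2 (by omega))⟩, ?_⟩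
  rintro j ⟨hj', hjmin⟩
  by_contra hne
  -- WLOG handle both orders via a helper
  have key : ∀ p q : ℕ, p < q → p + 1 < ℓ → q + 1 < ℓ →
      (∀ k, k + 1 < ℓ → delta (α p) (α (p + 1)) ≤ delta (α k) (α (k + 1))) →
      delta (α p) (α (p + 1)) = delta (α q) (α (q + 1)) → False := by
    intro p q hpq hp hq hpmin heq
    obtain ⟨hNp, hltp⟩ := hchain p hp
    obtain ⟨hNq, hltq⟩ := hchain q hq
    rw [Bool.lt_iff] at hltp hltq
    set m := delta (α p) (α (p + 1)) with hm
    -- α (p+1) m = true, propagate to α q, contradict α q m = false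
    have hprop : ∀ k, p + 1 ≤ k → k ≤ q → α k ⟨m, hNp⟩ = true := by
      intro k hk1 hk2
      induction k with
      | zero => omega
      | succ n ih =>
        rcases Nat.lt_or_ge (p + 1) (n + 1) with h | h
        · have hn : n + 1 < ℓ := by omega
          exact step_true (hchain n (by omega)) hNp
            (hpmin n (by omega)) (ih (by omega) (by omega))
        · have : n + 1 = p + 1 := by omega
          rw [this]; exact hltp.2
    have hq' : α q ⟨m, hNp⟩ = true := hprop q (by omega) le_rfl
    have hfalse : α q ⟨m, hNp⟩ = false := by
      have he : (⟨m, hNp⟩ : Fin N) = ⟨delta (α q) (α (q + 1)), hNq⟩ := Fin.ext heq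
      rw [he]; exact hltq.1
    rw [hq'] at hfalse
    exact absurd hfalse (by simp)
  have heq : delta (α i) (α (i + 1)) = delta (α j) (α (j + 1)) :=
    le_antisymm (hmin j (Finset.mem_range.2 (by omega))) (hjmin i hi')
  rcases Nat.lt_trichotomy i j with h | h | h
  · exact key i j h hi' hj' (fun k hk => hmin k (Finset.mem_range.2 (by omega))) heq
  · exact hne h.symm
  · exact key j i h hj' hi' hjmin heq.symm
end

section
/- Let G be a graph on vertex set [N] and let H be the step-up of G. Then the clique number of H satisfies ω(H) ≤ ω(G) + 1. -/
/-- For `a ≺ b ≺ c`, the triple `{a,b,c}` is an edge of the step-up of `G` iff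
`δ(a,b) < δ(b,c)` and `{δ(a,b), δ(b,c)}` is an edge of `G`. -/
def stepEdge {N : ℕ} (G : SimpleGraph (Fin N)) (a b c : Fin N → Bool) : Prop :=
  delta a b < delta b c ∧
    ∃ (h1 : delta a b < N) (h2 : delta b c < N),
      G.Adj ⟨delta a b, h1⟩ ⟨delta b c, h2⟩

/-!
Let `t` be the lexicographically largest element of a clique `S` of the step-up. For
`b ≺ c ≺ t` in `S`, the edge `{b, c, t}` gives `δ(b,c) < δ(c,t)`, and then `δ(b,t) = δ(b,c)`
since `b` and `c` already differ before `c` and `t` do. Hence `b ↦ δ(b,t)` sends any two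
elements `b ≺ c` of `S \ {t}` to the adjacent vertices `δ(b,c)` and `δ(c,t)` of `G`, so it maps
`S \ {t}` injectively onto a clique of `G`.
-/

section Delta

variable {N : ℕ} {a b c : Fin N → Bool}

lemma delta_spec (hab : a ≠ b) :
    ∃ h : delta a b < N, a ⟨delta a b, h⟩ ≠ b ⟨delta a b, h⟩ := by
  obtain ⟨i, hi⟩ := Function.ne_iff.mp hab
  exact Nat.sInf_mem (s := {i : ℕ | ∃ h : i < N, a ⟨i, h⟩ ≠ b ⟨i, h⟩}) ⟨i, i.2, hi⟩

lemma apply_eq_of_lt_delta {i : Fin N} (hi : (i : ℕ) < delta a b) : a i = b i := by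
  by_contra hne
  exact Nat.notMem_of_lt_sInf hi ⟨i.2, hne⟩

lemma delta_eq_of_forall_lt {i : Fin N} (hi : a i ≠ b i) (hlt : ∀ j < i, a j = b j) :
    delta a b = i := by
  refine le_antisymm (Nat.sInf_le ⟨i.2, hi⟩) (not_lt.mp fun hlt' => ?_)
  obtain ⟨h, hne⟩ := delta_spec (a := a) (b := b) fun hab => hi (congrFun hab i)
  exact hne (hlt ⟨_, h⟩ hlt')

lemma lexLt_iff_toLex_lt : lexLt a b ↔ toLex a < toLex b := by
  constructor
  · rintro ⟨h, hlt⟩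
    exact ⟨⟨delta a b, h⟩, fun j hj => apply_eq_of_lt_delta hj, hlt⟩
  · rintro ⟨⟨i, hi⟩, hbelow, hlt⟩
    obtain rfl : delta a b = i := delta_eq_of_forall_lt hlt.ne hbelow
    exact ⟨hi, hlt⟩

lemma lexLt.ne (h : lexLt a b) : a ≠ b :=
  (lexLt_iff_toLex_lt.mp h).ne

lemma delta_eq_of_delta_lt (hab : a ≠ b) (hlt : delta a b < delta b c) :
    delta a c = delta a b := by
  obtain ⟨h, hne⟩ := delta_spec hab
  refine delta_eq_of_forall_lt (i := ⟨delta a b, h⟩) ?_ fun j hj => ?_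
  · rwa [← apply_eq_of_lt_delta (a := b) (b := c) hlt]
  · have hj' : (j : ℕ) < delta a b := hj
    rw [apply_eq_of_lt_delta hj', apply_eq_of_lt_delta (hj'.trans hlt)]

end Delta

lemma stepEdge.adj_delta {N : ℕ} {G : SimpleGraph (Fin N)} {a b c : Fin N → Bool}
    (h : stepEdge G a b c) (hab : a ≠ b) (ha : delta a c < N) (hb : delta b c < N) :
    G.Adj ⟨delta a c, ha⟩ ⟨delta b c, hb⟩ := by
  obtain ⟨hlt, _, _, hadj⟩ := h
  convert hadj using 2
  exact delta_eq_of_delta_lt hab hlt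

lemma SimpleGraph.card_le_cliqueNum_of_pairwise_adj {α V : Type*} [Fintype α] [Finite V]
    (G : SimpleGraph V) (f : α → V) (hf : Pairwise fun x y => G.Adj (f x) (f y)) :
    Fintype.card α ≤ G.cliqueNum := by
  classical
  have hinj : Function.Injective f :=
    Function.injective_iff_pairwise_ne.mpr (hf.mono fun _ _ => G.ne_of_adj)
  rw [← Finset.card_univ, ← Finset.card_image_of_injective _ hinj]
  refine IsClique.card_le_cliqueNum (tc := ?_)
  rw [Finset.coe_image, Finset.coe_univ, Set.image_univ]
  exact Pairwise.range_pairwise hf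

/-- If `H` is the step-up of `G`, then `ω(H) ≤ ω(G) + 1`: every clique of the
step-up hypergraph has size at most `ω(G) + 1`. -/
theorem stepUp_cliqueNum {N : ℕ} (G : SimpleGraph (Fin N)) (S : Finset (Fin N → Bool))
    (hS : ∀ a ∈ S, ∀ b ∈ S, ∀ c ∈ S, lexLt a b → lexLt b c → stepEdge G a b c) :
    S.card ≤ G.cliqueNum + 1 := by
  obtain rfl | hne := S.eq_empty_or_nonempty
  · simp
  obtain ⟨top, htop, hmax⟩ := S.exists_max_image toLex hne
  have hlt_top (b : S.erase top) : lexLt b top :=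
    lexLt_iff_toLex_lt.mpr ((hmax b (Finset.mem_of_mem_erase b.2)).lt_of_ne
      (toLex.injective.ne (Finset.ne_of_mem_erase b.2)))
  let f : S.erase top → Fin N := fun b => ⟨delta b top, (delta_spec (hlt_top b).ne).1⟩
  have hadj (b c : S.erase top) (hbc : lexLt b.1 c.1) : G.Adj (f b) (f c) :=
    (hS b (Finset.mem_of_mem_erase b.2) c (Finset.mem_of_mem_erase c.2) top htop hbc
      (hlt_top c)).adj_delta hbc.ne _ _
  calc S.card = Fintype.card (S.erase top) + 1 := by
        rw [Fintype.card_coe, Finset.card_erase_add_one htop]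
    _ ≤ G.cliqueNum + 1 := by
      refine Nat.add_le_add_right (G.card_le_cliqueNum_of_pairwise_adj f fun b c hbc => ?_) 1
      rcases lt_or_gt_of_ne (toLex.injective.ne (Subtype.val_injective.ne hbc)) with h | h
      · exact hadj b c (lexLt_iff_toLex_lt.mpr h)
      · exact (hadj c b (lexLt_iff_toLex_lt.mpr h)).symm
end

section
/- Let H be the 3-uniform hypergraph on vertex set {1,…,N} where for x < y < z the triple {x,y,z} is an edge iff x + z < 2y. Then both the clique number and the independence number of H are at most ⌈log₂ N⌉ + 1. -/
/-- Let `H` be the 3-uniform hypergraph on `{1,…,N}` where for `x < y < z` the triple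
`{x,y,z}` is an edge iff `x + z < 2y`. Then every clique and every independent set of `H`
has size at most `⌈log₂ N⌉ + 1`. -/
theorem clique_indep_of_midpoint_hypergraph {N : ℕ} (S : Finset ℕ)
    (hS : S ⊆ Finset.Icc 1 N) :
    ((∀ x ∈ S, ∀ y ∈ S, ∀ z ∈ S, x < y → y < z → x + z < 2 * y) →
      S.card ≤ Nat.clog 2 N + 1) ∧
    ((∀ x ∈ S, ∀ y ∈ S, ∀ z ∈ S, x < y → y < z → ¬ (x + z < 2 * y)) →
      S.card ≤ Nat.clog 2 N + 1) := by
  have hfin : ∀ n, S.card = n → 2 ≤ n →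
      (2 ^ (n - 2) + 1 ≤ N → n ≤ Nat.clog 2 N + 1) := by
    intro n hn h2 hpow
    have hN : N ≤ 2 ^ Nat.clog 2 N := Nat.le_pow_clog (by norm_num) N
    have : 2 ^ (n - 2) < 2 ^ Nat.clog 2 N := by omega
    have := (Nat.pow_lt_pow_iff_right (by norm_num : 1 < 2)).mp this
    omega
  constructor <;> intro hprop
  · -- clique case
    rcases Nat.lt_or_ge S.card 2 with h2 | h2
    · omega
    set n := S.card with hn
    set f := S.orderEmbOfFin hn.symm with hf
    have hmem : ∀ i : Fin n, f i ∈ S := fun i => S.orderEmbOfFin_mem hn.symm i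
    have hmono : StrictMono f := (S.orderEmbOfFin hn.symm).strictMono
    have key : ∀ j, j + 1 < n →
        f ⟨n - 2 - j, by omega⟩ + 2 ^ j ≤ f ⟨n - 1, by omega⟩ := by
      intro j
      induction j with
      | zero =>
        intro hj
        have hlt : (⟨n - 2 - 0, by omega⟩ : Fin n) < ⟨n - 1, by omega⟩ := by
          simp [Fin.lt_def]; omega
        have := hmono hlt
        simp only [pow_zero]
        omega
      | succ j ih =>
        intro hj
        have ihj := ih (by omega)
        have hxy : (⟨n - 2 - (j + 1), by omega⟩ : Fin n) < ⟨n - 2 - j, by omega⟩ := by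
          simp [Fin.lt_def]; omega
        have hyz : (⟨n - 2 - j, by omega⟩ : Fin n) < ⟨n - 1, by omega⟩ := by
          simp [Fin.lt_def]; omega
        have hedge := hprop _ (hmem _) _ (hmem _) _ (hmem _) (hmono hxy) (hmono hyz)
        have hp : 2 ^ (j + 1) = 2 * 2 ^ j := by ring
        omega
    have hfinal := key (n - 2) (by omega)
    have h0 := hS (hmem ⟨n - 2 - (n - 2), by omega⟩)
    have hk := hS (hmem ⟨n - 1, by omega⟩)
    simp only [Finset.mem_Icc] at h0 hk
    exact hfin n rfl h2 (by omega)
  · -- independent case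
    rcases Nat.lt_or_ge S.card 2 with h2 | h2
    · omega
    set n := S.card with hn
    set f := S.orderEmbOfFin hn.symm with hf
    have hmem : ∀ i : Fin n, f i ∈ S := fun i => S.orderEmbOfFin_mem hn.symm i
    have hmono : StrictMono f := (S.orderEmbOfFin hn.symm).strictMono
    have key : ∀ j, ∀ hj : j + 1 < n,
        f ⟨0, by omega⟩ + 2 ^ j ≤ f ⟨j + 1, hj⟩ := by
      intro j
      induction j with
      | zero =>
        intro hj
        have hlt : (⟨0, by omega⟩ : Fin n) < ⟨0 + 1, hj⟩ := by
          simp [Fin.lt_def]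
        have := hmono hlt
        simp only [pow_zero]
        omega
      | succ j ih =>
        intro hj
        have ihj := ih (by omega)
        have hxy : (⟨0, by omega⟩ : Fin n) < ⟨j + 1, by omega⟩ := by
          simp [Fin.lt_def]
        have hyz : (⟨j + 1, by omega⟩ : Fin n) < ⟨j + 1 + 1, hj⟩ := by
          simp [Fin.lt_def]
        have hedge := hprop _ (hmem _) _ (hmem _) _ (hmem _) (hmono hxy) (hmono hyz)
        have hp : 2 ^ (j + 1) = 2 * 2 ^ j := by ring
        omega
    have hfinal := key (n - 2) (by omega)
    have h0 := hS (hmem ⟨0, by omega⟩)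
    have hk := hS (hmem ⟨n - 2 + 1, by omega⟩)
    simp only [Finset.mem_Icc] at h0 hk
    exact hfin n rfl h2 (by omega)
end

section
/- Every strictly monotone increasing sequence of 2^{s+t} real numbers contains either a cap of length s or a cup of length t, for all integers s, t ≥ 2. -/
/-- A sequence is a cup if `x i + x l ≥ 2 * x j` for all `i < j < l`. -/
def IsCup {n : ℕ} (x : Fin n → ℝ) : Prop :=
  ∀ i j l : Fin n, i < j → j < l → x i + x l ≥ 2 * x j

/-- A sequence is a cap if `x i + x l ≤ 2 * x j` for all `i < j < l`. -/
def IsCap {n : ℕ} (x : Fin n → ℝ) : Prop :=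
  ∀ i j l : Fin n, i < j → j < l → x i + x l ≤ 2 * x j

lemma strictMono_cons_aux {n s : ℕ} (a : Fin n) (g : Fin s → Fin n)
    (hg : StrictMono g) (ha : ∀ i, a < g i) :
    StrictMono (Fin.cons a g : Fin (s+1) → Fin n) := by
  intro i j hij
  rcases Fin.eq_zero_or_eq_succ j with rfl | ⟨j0, rfl⟩
  · exact absurd hij (Fin.not_lt_zero i)
  · rcases Fin.eq_zero_or_eq_succ i with rfl | ⟨i0, rfl⟩
    · simpa using ha j0
    · simpa using hg (Fin.succ_lt_succ_iff.mp hij)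

lemma strictMono_snoc_aux {n s : ℕ} (b : Fin n) (g : Fin s → Fin n)
    (hg : StrictMono g) (hb : ∀ i, g i < b) :
    StrictMono (Fin.snoc g b : Fin (s+1) → Fin n) := by
  intro i j hij
  rcases Fin.eq_castSucc_or_eq_last i with ⟨i0, rfl⟩ | rfl
  · rcases Fin.eq_castSucc_or_eq_last j with ⟨j0, rfl⟩ | rfl
    · simpa using hg (Fin.castSucc_lt_castSucc_iff.mp hij)
    · simpa using hb i0
  · exact absurd hij (not_lt.mpr (Fin.le_last j))

lemma isCap_cons_aux {n s : ℕ} (x : Fin n → ℝ) (a : Fin n) (g : Fin s → Fin n)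
    (hcap : IsCap (x ∘ g)) (h : ∀ j l : Fin s, x a + x (g l) ≤ 2 * x (g j)) :
    IsCap (x ∘ (Fin.cons a g : Fin (s+1) → Fin n)) := by
  intro i j l hij hjl
  rcases Fin.eq_zero_or_eq_succ l with rfl | ⟨l0, rfl⟩
  · exact absurd (hij.trans hjl) (Fin.not_lt_zero i)
  rcases Fin.eq_zero_or_eq_succ j with rfl | ⟨j0, rfl⟩
  · exact absurd hij (Fin.not_lt_zero i)
  rcases Fin.eq_zero_or_eq_succ i with rfl | ⟨i0, rfl⟩
  · simpa using h j0 l0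
  · simpa using hcap i0 j0 l0 (Fin.succ_lt_succ_iff.mp hij) (Fin.succ_lt_succ_iff.mp hjl)

lemma isCup_snoc_aux {n s : ℕ} (x : Fin n → ℝ) (b : Fin n) (g : Fin s → Fin n)
    (hcup : IsCup (x ∘ g)) (h : ∀ i j : Fin s, x (g i) + x b ≥ 2 * x (g j)) :
    IsCup (x ∘ (Fin.snoc g b : Fin (s+1) → Fin n)) := by
  intro i j l hij hjl
  rcases Fin.eq_castSucc_or_eq_last i with ⟨i0, rfl⟩ | rfl
  · rcases Fin.eq_castSucc_or_eq_last j with ⟨j0, rfl⟩ | rfl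
    · rcases Fin.eq_castSucc_or_eq_last l with ⟨l0, rfl⟩ | rfl
      · simpa using hcup i0 j0 l0 (Fin.castSucc_lt_castSucc_iff.mp hij)
          (Fin.castSucc_lt_castSucc_iff.mp hjl)
      · simpa using h i0 j0
    · exact absurd hjl (not_lt.mpr (Fin.le_last l))
  · exact absurd hij (not_lt.mpr (Fin.le_last j))

lemma key_lemma (k : ℕ) : ∀ s t : ℕ, s + t ≤ k → 2 ≤ s → 2 ≤ t →
    ∀ (n : ℕ) (x : Fin n → ℝ), StrictMono x → ∀ A : Finset (Fin n), 2 ^ (s + t) ≤ A.card →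
    (∃ g : Fin s → Fin n, StrictMono g ∧ (∀ i, g i ∈ A) ∧ IsCap (x ∘ g)) ∨
    (∃ g : Fin t → Fin n, StrictMono g ∧ (∀ i, g i ∈ A) ∧ IsCup (x ∘ g)) := by
  induction k with
  | zero => intro s t hst hs ht; omega
  | succ k ih =>
    intro s t hst hs ht n x hx A hA
    have h2pow : 2 ≤ 2 ^ (s + t) := by
      calc 2 = 2 ^ 1 := by norm_num
      _ ≤ 2 ^ (s + t) := Nat.pow_le_pow_right (by norm_num) (by omega)
    have hcard2 : 2 ≤ A.card := le_trans h2pow hA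
    have hne : A.Nonempty := Finset.card_pos.mp (by omega)
    obtain ⟨a, hamem, ha_min⟩ : ∃ a ∈ A, ∀ p ∈ A, a ≤ p :=
      ⟨A.min' hne, A.min'_mem hne, fun p hp => A.min'_le p hp⟩
    obtain ⟨b, hbmem, hb_max⟩ : ∃ b ∈ A, ∀ p ∈ A, p ≤ b :=
      ⟨A.max' hne, A.max'_mem hne, fun p hp => A.le_max' p hp⟩
    have hab : a < b := by
      rcases Finset.one_lt_card.mp (by omega : 1 < A.card) with ⟨u, hu, v, hv, huv⟩
      have h1 : (a : ℕ) ≤ (u : ℕ) := ha_min u hu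
      have h2 : (a : ℕ) ≤ (v : ℕ) := ha_min v hv
      have h3 : (u : ℕ) ≤ (b : ℕ) := hb_max u hu
      have h4 : (v : ℕ) ≤ (b : ℕ) := hb_max v hv
      have h5 : (u : ℕ) ≠ (v : ℕ) := fun h => huv (Fin.ext h)
      exact Fin.lt_def.mpr (by omega)
    have hxab : x a < x b := hx hab
    -- base cases
    rcases Nat.eq_or_lt_of_le hs with hs2 | hs3
    · subst hs2
      left
      refine ⟨fun i => if (i : ℕ) = 0 then a else b, ?_, ?_, ?_⟩
      · intro i j hij
        have h1 : (i : ℕ) < (j : ℕ) := hij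
        have h2 : (j : ℕ) < 2 := j.isLt
        have hi0 : (i : ℕ) = 0 := by omega
        have hj1 : ¬ (j : ℕ) = 0 := by omega
        simp only [hi0, hj1, if_pos rfl, if_neg hj1]
        exact hab
      · intro i; dsimp only; split
        · exact hamem
        · exact hbmem
      · intro i j l hij hjl
        exfalso
        have h1 : (i : ℕ) < (j : ℕ) := hij
        have h2 : (j : ℕ) < (l : ℕ) := hjl
        have h3 : (l : ℕ) < 2 := l.isLt
        omega
    rcases Nat.eq_or_lt_of_le ht with ht2 | ht3
    · subst ht2
      right
      refine ⟨fun i => if (i : ℕ) = 0 then a else b, ?_, ?_, ?_⟩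
      · intro i j hij
        have h1 : (i : ℕ) < (j : ℕ) := hij
        have h2 : (j : ℕ) < 2 := j.isLt
        have hi0 : (i : ℕ) = 0 := by omega
        have hj1 : ¬ (j : ℕ) = 0 := by omega
        simp only [hi0, hj1, if_pos rfl, if_neg hj1]
        exact hab
      · intro i; dsimp only; split
        · exact hamem
        · exact hbmem
      · intro i j l hij hjl
        exfalso
        have h1 : (i : ℕ) < (j : ℕ) := hij
        have h2 : (j : ℕ) < (l : ℕ) := hjl
        have h3 : (l : ℕ) < 2 := l.isLt
        omega
    -- inductive case : s ≥ 3, t ≥ 3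
    obtain ⟨s', rfl⟩ : ∃ s', s = s' + 1 := ⟨s - 1, by omega⟩
    obtain ⟨t', rfl⟩ : ∃ t', t = t' + 1 := ⟨t - 1, by omega⟩
    have hs' : 2 ≤ s' := by omega
    have ht' : 2 ≤ t' := by omega
    set U := A.filter (fun p => x a + x b ≤ 2 * x p) with hU_def
    set L := A.filter (fun p => 2 * x p ≤ x a + x b) with hL_def
    have hsub : A ⊆ L ∪ U := by
      intro p hp
      rcases le_total (2 * x p) (x a + x b) with h | h
      · exact Finset.mem_union_left _ (Finset.mem_filter.mpr ⟨hp, h⟩)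
      · exact Finset.mem_union_right _ (Finset.mem_filter.mpr ⟨hp, h⟩)
    have hcards : A.card ≤ L.card + U.card :=
      le_trans (Finset.card_le_card hsub) (Finset.card_union_le _ _)
    have hpow : 2 ^ (s' + 1 + (t' + 1)) = 2 ^ (s' + (t' + 1)) + 2 ^ (s' + 1 + t') := by
      have e1 : s' + 1 + t' = s' + (t' + 1) := by omega
      have e2 : s' + 1 + (t' + 1) = (s' + (t' + 1)) + 1 := by omega
      rw [e1, e2, pow_succ, mul_two]
    by_cases hU : 2 ^ (s' + (t' + 1)) ≤ U.card
    · -- recurse with (s', t'+1) on U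
      rcases ih s' (t' + 1) (by omega) hs' (by omega) n x hx U hU with
        ⟨g', hg'm, hg'mem, hg'cap⟩ | ⟨g', hg'm, hg'mem, hg'cup⟩
      · -- prepend a
        left
        have hgA : ∀ i, g' i ∈ A := fun i => (Finset.mem_filter.mp (hg'mem i)).1
        have hgU : ∀ i, x a + x b ≤ 2 * x (g' i) :=
          fun i => (Finset.mem_filter.mp (hg'mem i)).2
        have halt : ∀ i, a < g' i := by
          intro i
          refine lt_of_le_of_ne (ha_min _ (hgA i)) ?_
          intro h
          have := hgU i
          rw [← h] at this
          linarith
        refine ⟨Fin.cons a g', strictMono_cons_aux a g' hg'm halt, ?_, ?_⟩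
        · intro i
          rcases Fin.eq_zero_or_eq_succ i with rfl | ⟨i0, rfl⟩
          · simpa using hamem
          · simpa using hgA i0
        · refine isCap_cons_aux x a g' hg'cap ?_
          intro j l
          have h1 := hgU j
          have h2 : x (g' l) ≤ x b := hx.monotone (hb_max _ (hgA l))
          linarith
      · right
        exact ⟨g', hg'm, fun i => (Finset.mem_filter.mp (hg'mem i)).1, hg'cup⟩
    · have hL : 2 ^ (s' + 1 + t') ≤ L.card := by
        have h1 : 2 ^ (s' + 1 + (t' + 1)) ≤ L.card + U.card := le_trans hA hcards
        omega
      rcases ih (s' + 1) t' (by omega) (by omega) ht' n x hx L hL with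
        ⟨g', hg'm, hg'mem, hg'cap⟩ | ⟨g', hg'm, hg'mem, hg'cup⟩
      · left
        exact ⟨g', hg'm, fun i => (Finset.mem_filter.mp (hg'mem i)).1, hg'cap⟩
      · -- append b
        right
        have hgA : ∀ i, g' i ∈ A := fun i => (Finset.mem_filter.mp (hg'mem i)).1
        have hgL : ∀ i, 2 * x (g' i) ≤ x a + x b :=
          fun i => (Finset.mem_filter.mp (hg'mem i)).2
        have hblt : ∀ i, g' i < b := by
          intro i
          refine lt_of_le_of_ne (hb_max _ (hgA i)) ?_
          intro h
          have := hgL i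
          rw [h] at this
          linarith
        refine ⟨Fin.snoc g' b, strictMono_snoc_aux b g' hg'm hblt, ?_, ?_⟩
        · intro i
          rcases Fin.eq_castSucc_or_eq_last i with ⟨i0, rfl⟩ | rfl
          · simpa using hgA i0
          · simpa using hbmem
        · refine isCup_snoc_aux x b g' hg'cup ?_
          intro i j
          have h1 := hgL j
          have h2 : x a ≤ x (g' i) := hx.monotone (ha_min _ (hgA i))
          linarith

/-- Every strictly increasing sequence of `2^(s+t)` reals contains either a cap of
length `s` or a cup of length `t`, for all `s, t ≥ 2`. -/
theorem cap_or_cup_of_strictMono (s t : ℕ) (hs : 2 ≤ s) (ht : 2 ≤ t)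
    (x : Fin (2 ^ (s + t)) → ℝ) (hx : StrictMono x) :
    (∃ g : Fin s → Fin (2 ^ (s + t)), StrictMono g ∧ IsCap (x ∘ g)) ∨
    (∃ g : Fin t → Fin (2 ^ (s + t)), StrictMono g ∧ IsCup (x ∘ g)) := by
  have := key_lemma (s + t) s t le_rfl hs ht (2 ^ (s + t)) x hx Finset.univ
    (by simp)
  rcases this with ⟨g, h1, _, h3⟩ | ⟨g, h1, _, h3⟩
  · exact Or.inl ⟨g, h1, h3⟩
  · exact Or.inr ⟨g, h1, h3⟩
end

section
/- Let M be a q × N real matrix such that no row contains repeated elements. Then M contains a q × N' submatrix, obtained by selecting N' = ⌈N^{1/2^q}⌉ columns (keeping their order), in which every row is strictly monotone (each row either strictly increasing or strictly decreasing). -/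
/-!
Induction on the number of rows. Given a row-monotone choice of `⌈N ^ (1 / 2 ^ q)⌉` columns
for the last `q` rows, the Erdős–Szekeres theorem selects among them `⌈√⌈N ^ (1 / 2 ^ q)⌉⌉`
columns on which the first row is also monotone, and `√(N ^ (1 / 2 ^ q)) = N ^ (1 / 2 ^ (q + 1))`.

Erdős–Szekeres is proved by labelling each index with the length of the longest increasing
subsequence ending there: indices with equal labels form a decreasing subsequence, so if no label
exceeds `r` and `r * s < n`, pigeonhole yields a decreasing subsequence longer than `s`.
-/

open Finset Function

namespace ErdosSzekeres

variable {ι α : Type*} [LinearOrder ι] [Fintype ι] [LinearOrder α] {f : ι → α}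

def incChainsEndingAt (f : ι → α) (i : ι) : Finset (Finset ι) :=
  univ.filter fun t => i ∈ t ∧ (∀ j ∈ t, j ≤ i) ∧ StrictMonoOn f t

def incLengthAt (f : ι → α) (i : ι) : ℕ :=
  (incChainsEndingAt f i).sup card

theorem singleton_mem_incChainsEndingAt (i : ι) : {i} ∈ incChainsEndingAt f i :=
  mem_filter.2 ⟨mem_univ _, mem_singleton_self i, fun _ hj => (mem_singleton.1 hj).le,
    by simp only [coe_singleton, Set.strictMonoOn_singleton]⟩

theorem one_le_incLengthAt (i : ι) : 1 ≤ incLengthAt f i :=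
  le_sup (f := card) (singleton_mem_incChainsEndingAt i)

theorem exists_mem_incChainsEndingAt_card_eq (i : ι) :
    ∃ t ∈ incChainsEndingAt f i, #t = incLengthAt f i :=
  let ⟨t, ht, hmax⟩ := exists_mem_eq_sup _ ⟨_, singleton_mem_incChainsEndingAt i⟩ card
  ⟨t, ht, hmax.symm⟩

theorem insert_mem_incChainsEndingAt {i j : ι} {t : Finset ι} (ht : t ∈ incChainsEndingAt f i)
    (hij : i < j) (hf : f i < f j) : insert j t ∈ incChainsEndingAt f j := by
  obtain ⟨-, hit, hle, hmono⟩ := mem_filter.1 ht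
  refine mem_filter.2 ⟨mem_univ _, mem_insert_self j t, ?_, ?_⟩
  · simpa only [mem_insert, forall_eq_or_imp] using ⟨le_rfl, fun a ha => (hle a ha).trans hij.le⟩
  simp only [StrictMonoOn, coe_insert, Set.mem_insert_iff, mem_coe]
  rintro a (rfl | ha) b (rfl | hb) hab
  · exact absurd hab (lt_irrefl _)
  · exact absurd ((hle b hb).trans_lt hij) hab.not_gt
  · exact (hmono.monotoneOn ha hit (hle a ha)).trans_lt hf
  · exact hmono ha hb hab

theorem incLengthAt_lt {i j : ι} (hij : i < j) (hf : f i < f j) :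
    incLengthAt f i < incLengthAt f j := by
  obtain ⟨t, ht, hcard⟩ := exists_mem_incChainsEndingAt_card_eq (f := f) i
  have hjt : j ∉ t := fun hj => ((mem_filter.1 ht).2.2.1 j hj).not_gt hij
  calc incLengthAt f i < #(insert j t) := by rw [card_insert_of_notMem hjt, hcard]; omega
    _ ≤ incLengthAt f j := le_sup (f := card) (insert_mem_incChainsEndingAt ht hij hf)

theorem exists_strictMonoOn_or_strictAntiOn (hf : Injective f) {r s : ℕ}
    (hn : r * s < Fintype.card ι) :
    (∃ t : Finset ι, r < #t ∧ StrictMonoOn f t) ∨ ∃ t : Finset ι, s < #t ∧ StrictAntiOn f t := by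
  by_cases hlong : ∃ i, r < incLengthAt f i
  · obtain ⟨i, hi⟩ := hlong
    obtain ⟨t, ht, hcard⟩ := exists_mem_incChainsEndingAt_card_eq (f := f) i
    exact Or.inl ⟨t, hcard ▸ hi, (mem_filter.1 ht).2.2.2⟩
  simp only [not_exists, not_lt] at hlong
  have hmaps : ∀ i ∈ (univ : Finset ι), incLengthAt f i ∈ Icc 1 r :=
    fun i _ => mem_Icc.2 ⟨one_le_incLengthAt i, hlong i⟩
  obtain ⟨l, -, hfiber⟩ := exists_lt_card_fiber_of_mul_lt_card_of_maps_to hmaps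
    (by rwa [Nat.card_Icc, Nat.add_sub_cancel, card_univ])
  refine Or.inr ⟨_, hfiber, fun i hi j hj hij => ?_⟩
  have hlabel : incLengthAt f i = incLengthAt f j :=
    (mem_filter.1 hi).2.trans (mem_filter.1 hj).2.symm
  refine (lt_or_gt_of_ne (hf.ne hij.ne)).resolve_left fun hlt => ?_
  exact (incLengthAt_lt hij hlt).ne hlabel

theorem exists_strictMono_subseq (hf : Injective f) {k : ℕ}
    (hk : k ≤ ⌈√(Fintype.card ι : ℝ)⌉₊) :
    ∃ g : Fin k → ι, StrictMono g ∧ (StrictMono (f ∘ g) ∨ StrictAnti (f ∘ g)) := by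
  rcases Nat.eq_zero_or_pos k with rfl | hk0
  · exact ⟨Fin.elim0, fun a => a.elim0, Or.inl fun a => a.elim0⟩
  have hsq : (k - 1) * (k - 1) < Fintype.card ι := by
    have hlt : ((k - 1 : ℕ) : ℝ) < √(Fintype.card ι : ℝ) := Nat.lt_ceil.1 (by omega)
    rwa [Real.lt_sqrt (Nat.cast_nonneg _), ← Nat.cast_pow, Nat.cast_lt, sq] at hlt
  rcases exists_strictMonoOn_or_strictAntiOn hf hsq with ⟨t, ht, hmono⟩ | ⟨t, ht, hanti⟩
  · have hkt : k ≤ #t := by omega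
    let g := t.orderEmbOfCardLe hkt
    exact ⟨g, g.strictMono, Or.inl fun a b hab =>
      hmono (t.orderEmbOfCardLe_mem hkt a) (t.orderEmbOfCardLe_mem hkt b) (g.strictMono hab)⟩
  · have hkt : k ≤ #t := by omega
    let g := t.orderEmbOfCardLe hkt
    exact ⟨g, g.strictMono, Or.inr fun a b hab =>
      hanti (t.orderEmbOfCardLe_mem hkt a) (t.orderEmbOfCardLe_mem hkt b) (g.strictMono hab)⟩

end ErdosSzekeres

theorem rpow_one_div_two_pow_succ {x : ℝ} (hx : 0 ≤ x) (q : ℕ) :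
    x ^ ((1 : ℝ) / 2 ^ (q + 1)) = √(x ^ ((1 : ℝ) / 2 ^ q)) := by
  rw [Real.sqrt_eq_rpow, ← Real.rpow_mul hx, pow_succ]
  congr 1
  field_simp

/-- Every `q × N` real matrix whose rows have no repeated elements contains a
row-monotone `q × ⌈N^(1/2^q)⌉` submatrix (obtained by selecting columns in order). -/
theorem rowMonotone_submatrix {q N : ℕ} (M : Fin q → Fin N → ℝ)
    (hM : ∀ i, Function.Injective (M i)) :
    ∃ g : Fin (⌈(N : ℝ) ^ ((1 : ℝ) / 2 ^ q)⌉₊) → Fin N, StrictMono g ∧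
      ∀ i, StrictMono (fun j => M i (g j)) ∨ StrictAnti (fun j => M i (g j)) := by
  induction q with
  | zero =>
    have hN : ⌈(N : ℝ) ^ ((1 : ℝ) / 2 ^ 0)⌉₊ = N := by norm_num
    exact ⟨Fin.castOrderIso hN, (Fin.castOrderIso hN).strictMono, fun i => i.elim0⟩
  | succ q ih =>
    obtain ⟨g₁, hg₁, hrows⟩ := ih (fun i => M i.succ) (fun i => hM i.succ)
    have hk : ⌈(N : ℝ) ^ ((1 : ℝ) / 2 ^ (q + 1))⌉₊ ≤
        ⌈√(Fintype.card (Fin ⌈(N : ℝ) ^ ((1 : ℝ) / 2 ^ q)⌉₊) : ℝ)⌉₊ := by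
      rw [rpow_one_div_two_pow_succ (Nat.cast_nonneg N), Fintype.card_fin]
      exact Nat.ceil_mono (Real.sqrt_le_sqrt (Nat.le_ceil _))
    obtain ⟨g₂, hg₂, hrow₀⟩ :=
      ErdosSzekeres.exists_strictMono_subseq ((hM 0).comp hg₁.injective) hk
    refine ⟨g₁ ∘ g₂, hg₁.comp hg₂, Fin.cases hrow₀ fun i => ?_⟩
    exact (hrows i).imp (fun h => h.comp hg₂) (fun h => h.comp_strictMono hg₂)
end

section
/- For every q ≥ 1 there exists a constant c = c(q) > 0 such that every q × N real matrix with no repeated elements in any row contains a q × N' cupcap submatrix with N' ≥ c(log N)^{1/q}. -/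
/-!
By Erdős–Szekeres, applied row by row, `m ^ (2 ^ q)` columns contain `m` on which every row is
strictly monotone; negating the decreasing rows, all rows become increasing.

For one increasing row, split the columns at the midpoint `(x u + x t) / 2` of the values at the
extreme columns `u < t`: a cup below the midpoint extends by `t`, a cap above it by `u`, so
`2 ^ (a + b)` columns contain a cup of length `a + 1` or a cap of length `b + 1`.

For `q ≥ 2` rows, cut the columns strictly between the first and the last into `T` consecutive
blocks. If in some block every row rises across the block by no more than from the first column
to the block and from the block to the last column, recurse inside that block: a cup common to all
rows extends by the last column, a cap by the first. Otherwise, by pigeonhole, many blocks fail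
the same condition in the same row; their left (resp. right) endpoints form a cup (resp. cap) in
that row, and the other `q - 1` rows are handled by induction on `q`. Altogether `2 ^ O_q(k ^ q)`
columns give a `q × k` cupcap submatrix, hence `k ≥ c (log N) ^ (1 / q)`.
-/

open Finset

namespace CupCap

variable {ι κ : Type*} [LinearOrder ι] [LinearOrder κ]

def CupOn (x : ι → ℝ) (s : Set ι) : Prop :=
  ∀ ⦃a⦄, a ∈ s → ∀ ⦃b⦄, b ∈ s → ∀ ⦃c⦄, c ∈ s → a < b → b < c → 2 * x b ≤ x a + x c

def CapOn (x : ι → ℝ) (s : Set ι) : Prop :=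
  ∀ ⦃a⦄, a ∈ s → ∀ ⦃b⦄, b ∈ s → ∀ ⦃c⦄, c ∈ s → a < b → b < c → x a + x c ≤ 2 * x b

section CupOn

variable {x : ι → ℝ} {s t : Set ι}

theorem CupOn.mono (h : CupOn x t) (hst : s ⊆ t) : CupOn x s :=
  fun _ ha _ hb _ hc => h (hst ha) (hst hb) (hst hc)

theorem CapOn.mono (h : CapOn x t) (hst : s ⊆ t) : CapOn x s :=
  fun _ ha _ hb _ hc => h (hst ha) (hst hb) (hst hc)

theorem _root_.Set.Subsingleton.cupOn (hs : s.Subsingleton) : CupOn x s :=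
  fun _ ha _ hb _ _ hab _ => absurd (hs ha hb) hab.ne

theorem _root_.Set.Subsingleton.capOn (hs : s.Subsingleton) : CapOn x s :=
  fun _ ha _ hb _ _ hab _ => absurd (hs ha hb) hab.ne

theorem cupOn_neg : CupOn (-x) s ↔ CapOn x s := by
  refine ⟨fun h a ha b hb c hc hab hbc => ?_, fun h a ha b hb c hc hab hbc => ?_⟩
  · have := h ha hb hc hab hbc
    simp only [Pi.neg_apply] at this
    linarith
  · have := h ha hb hc hab hbc
    simp only [Pi.neg_apply]
    linarith

theorem capOn_neg : CapOn (-x) s ↔ CupOn x s := by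
  rw [← cupOn_neg, neg_neg]

theorem CupOn.image {f : κ → ι} (hf : StrictMono f) {s : Set κ} (h : CupOn (x ∘ f) s) :
    CupOn x (f '' s) := by
  rintro _ ⟨a, ha, rfl⟩ _ ⟨b, hb, rfl⟩ _ ⟨c, hc, rfl⟩ hab hbc
  exact h ha hb hc (hf.lt_iff_lt.mp hab) (hf.lt_iff_lt.mp hbc)

theorem CapOn.image {f : κ → ι} (hf : StrictMono f) {s : Set κ} (h : CapOn (x ∘ f) s) :
    CapOn x (f '' s) := by
  rintro _ ⟨a, ha, rfl⟩ _ ⟨b, hb, rfl⟩ _ ⟨c, hc, rfl⟩ hab hbc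
  exact h ha hb hc (hf.lt_iff_lt.mp hab) (hf.lt_iff_lt.mp hbc)

theorem CupOn.insert_of_gap (h : CupOn x s) {t : ι} (hlt : ∀ b ∈ s, b < t) {lo hi : ℝ}
    (hbd : ∀ b ∈ s, lo ≤ x b ∧ x b ≤ hi) (hgap : hi - lo ≤ x t - hi) :
    CupOn x (insert t s) := by
  have hle : ∀ b ∈ insert t s, b ≤ t := by
    rintro b (rfl | hb)
    exacts [le_rfl, (hlt b hb).le]
  intro a ha b hb c hc hab hbc
  have ha' : a ∈ s := ha.resolve_left fun h => (hab.trans_le (hle b hb)).ne h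
  have hb' : b ∈ s := hb.resolve_left fun h => (hbc.trans_le (hle c hc)).ne h
  rcases hc with rfl | hc
  · linarith [(hbd a ha').1, (hbd b hb').2]
  · exact h ha' hb' hc hab hbc

theorem CapOn.insert_of_gap (h : CapOn x s) {t : ι} (hlt : ∀ b ∈ s, t < b) {lo hi : ℝ}
    (hbd : ∀ b ∈ s, lo ≤ x b ∧ x b ≤ hi) (hgap : hi - lo ≤ lo - x t) :
    CapOn x (insert t s) := by
  have hle : ∀ b ∈ insert t s, t ≤ b := by
    rintro b (rfl | hb)
    exacts [le_rfl, (hlt b hb).le]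
  intro a ha b hb c hc hab hbc
  have hb' : b ∈ s := hb.resolve_left fun h => ((hle a ha).trans_lt hab).ne' h
  have hc' : c ∈ s := hc.resolve_left fun h => ((hle b hb).trans_lt hbc).ne' h
  rcases ha with rfl | ha
  · linarith [(hbd b hb').1, (hbd c hc').2]
  · exact h ha hb' hc' hab hbc

end CupOn

section ErdosSzekeres

variable {α : Type*} [LinearOrder α]

open Classical in
noncomputable def incChains (f : ι → α) (U : Finset ι) (i : ι) : Finset (Finset ι) :=
  (U.filter (· ≤ i)).powerset.filter fun t => i ∈ t ∧ StrictMonoOn f t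

noncomputable def incLength (f : ι → α) (U : Finset ι) (i : ι) : ℕ :=
  (incChains f U i).sup card

variable {f : ι → α} {U : Finset ι} {i j : ι}

theorem mem_incChains {t : Finset ι} :
    t ∈ incChains f U i ↔ t ⊆ U ∧ (∀ b ∈ t, b ≤ i) ∧ i ∈ t ∧ StrictMonoOn f t := by
  simp only [incChains, mem_filter, mem_powerset, subset_iff, forall_and, and_assoc]

theorem le_incLength {t : Finset ι} (ht : t ∈ incChains f U i) : #t ≤ incLength f U i :=
  le_sup (f := card) ht

theorem singleton_mem_incChains (hi : i ∈ U) : {i} ∈ incChains f U i :=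
  mem_incChains.mpr ⟨singleton_subset_iff.mpr hi, by simp, mem_singleton_self i, by simp⟩

theorem exists_card_eq_incLength (hi : i ∈ U) :
    ∃ t ∈ incChains f U i, #t = incLength f U i := by
  obtain ⟨t, ht, hsup⟩ := exists_mem_eq_sup _ ⟨_, singleton_mem_incChains (f := f) hi⟩ card
  exact ⟨t, ht, hsup.symm⟩

theorem incLength_lt_incLength (hi : i ∈ U) (hj : j ∈ U) (hij : i < j) (hf : f i < f j) :
    incLength f U i < incLength f U j := by
  obtain ⟨t, ht, hcard⟩ := exists_card_eq_incLength (f := f) hi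
  obtain ⟨htU, hti, hit, htf⟩ := mem_incChains.mp ht
  have hjt : j ∉ t := fun h => (hti j h).not_gt hij
  have hins : StrictMonoOn f (insert j t : Finset ι) := by
    rw [coe_insert]
    rintro a (rfl | ha) b (rfl | hb) hab
    · exact absurd hab (lt_irrefl _)
    · exact absurd ((hti b hb).trans_lt hij) hab.not_gt
    · exact (htf.monotoneOn ha hit (hti a ha)).trans_lt hf
    · exact htf ha hb hab
  calc incLength f U i < #(insert j t) := by rw [card_insert_of_notMem hjt, hcard]; omega
    _ ≤ incLength f U j := le_incLength <| mem_incChains.mpr ⟨insert_subset hj htU,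
        fun b hb => (mem_insert.mp hb).elim le_of_eq fun hb => (hti b hb).trans hij.le,
        mem_insert_self j t, hins⟩

/-- Erdős–Szekeres: `f` decreases along each level set of `incLength f U`, and there are at most
`r` levels unless some increasing subsequence is longer than `r`. -/
theorem exists_strictMonoOn_or_strictAntiOn (f : ι → α) {U : Finset ι} (hf : Set.InjOn f U)
    {r s : ℕ} (hU : r * s < #U) :
    (∃ V ⊆ U, r < #V ∧ StrictMonoOn f V) ∨ ∃ V ⊆ U, s < #V ∧ StrictAntiOn f V := by
  by_cases hinc : ∃ V ⊆ U, r < #V ∧ StrictMonoOn f V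
  · exact .inl hinc
  push Not at hinc
  have hmaps : ∀ i ∈ U, incLength f U i ∈ Icc 1 r := by
    intro i hi
    obtain ⟨t, ht, hcard⟩ := exists_card_eq_incLength (f := f) hi
    obtain ⟨htU, -, -, htf⟩ := mem_incChains.mp ht
    refine mem_Icc.mpr ⟨?_, hcard ▸ not_lt.mp fun h => hinc t htU h htf⟩
    simpa using le_incLength (singleton_mem_incChains (f := f) hi)
  obtain ⟨l, -, hl⟩ := exists_lt_card_fiber_of_mul_lt_card_of_maps_to hmaps (by simpa using hU)
  refine .inr ⟨_, filter_subset _ U, hl, fun i hi j hj hij => ?_⟩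
  simp only [coe_filter, Set.mem_ofPred_eq] at hi hj
  refine (lt_or_gt_of_ne fun h => hij.ne (hf hi.1 hj.1 h)).resolve_left fun h => ?_
  exact (incLength_lt_incLength hi.1 hj.1 hij h).ne (hi.2.trans hj.2.symm)

end ErdosSzekeres

theorem exists_subset_forall_strictMonoOn_or_strictAntiOn {q : ℕ} (x : Fin q → ι → ℝ)
    {U : Finset ι} (hx : ∀ r, Set.InjOn (x r) U) {m : ℕ} (hU : m ^ 2 ^ q < #U) :
    ∃ V ⊆ U, m < #V ∧ ∀ r, StrictMonoOn (x r) V ∨ StrictAntiOn (x r) V := by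
  induction q generalizing m with
  | zero => exact ⟨U, subset_rfl, by simpa using hU, fun r => r.elim0⟩
  | succ q ih =>
    obtain ⟨V, hVU, hV, hVx⟩ := ih (fun r => x r.succ) (fun r => hx _) (m := m * m)
      (by rwa [← pow_two, ← pow_mul, ← pow_succ'])
    have hVW : ∃ W ⊆ V, m < #W ∧ (StrictMonoOn (x 0) W ∨ StrictAntiOn (x 0) W) := by
      rcases exists_strictMonoOn_or_strictAntiOn (x 0) ((hx 0).mono (coe_subset.mpr hVU)) hV
        with ⟨W, hWV, hW, hWx⟩ | ⟨W, hWV, hW, hWx⟩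
      exacts [⟨W, hWV, hW, .inl hWx⟩, ⟨W, hWV, hW, .inr hWx⟩]
    obtain ⟨W, hWV, hW, hWx⟩ := hVW
    refine ⟨W, hWV.trans hVU, hW, fun r => ?_⟩
    induction r using Fin.cases with
    | zero => exact hWx
    | succ r => exact (hVx r).imp (·.mono (coe_subset.mpr hWV)) (·.mono (coe_subset.mpr hWV))

theorem CupOn.insert_of_two_mul_le {x : ι → ℝ} {s : Finset ι} (hs : CupOn x s) {u t : ι}
    (hus : ∀ c ∈ s, x u ≤ x c) (hst : ∀ c ∈ s, c ≤ t) (hmid : ∀ c ∈ s, 2 * x c ≤ x u + x t)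
    (hut : x u < x t) : t ∉ s ∧ CupOn x ↑(insert t s) := by
  have hts : t ∉ s := fun h => by linarith [hmid t h]
  refine ⟨hts, ?_⟩
  rw [coe_insert]
  refine hs.insert_of_gap (fun c hc => (hst c hc).lt_of_ne fun h => hts (h ▸ hc))
    (lo := x u) (hi := (x u + x t) / 2) (fun c hc => ⟨hus c hc, by linarith [hmid c hc]⟩)
    (by linarith)

theorem CapOn.insert_of_le_two_mul {x : ι → ℝ} {s : Finset ι} (hs : CapOn x s) {u t : ι}
    (hst : ∀ c ∈ s, x c ≤ x t) (hus : ∀ c ∈ s, u ≤ c) (hmid : ∀ c ∈ s, x u + x t ≤ 2 * x c)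
    (hut : x u < x t) : u ∉ s ∧ CapOn x ↑(insert u s) := by
  have hus' : u ∉ s := fun h => by linarith [hmid u h]
  refine ⟨hus', ?_⟩
  rw [coe_insert]
  refine hs.insert_of_gap (fun c hc => (hus c hc).lt_of_ne fun h => hus' (h ▸ hc))
    (lo := (x u + x t) / 2) (hi := x t) (fun c hc => ⟨by linarith [hmid c hc], hst c hc⟩)
    (by linarith)

theorem exists_cupOn_or_capOn (x : ι → ℝ) (a b : ℕ) {U : Finset ι} (hx : StrictMonoOn x U)
    (hU : 2 ^ (a + b) ≤ #U) :
    ∃ s ⊆ U, (a + 1 ≤ #s ∧ CupOn x s) ∨ (b + 1 ≤ #s ∧ CapOn x s) := by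
  induction a generalizing b U with
  | zero =>
    obtain ⟨u, hu⟩ := card_pos.mp (lt_of_lt_of_le (by positivity) hU)
    exact ⟨{u}, singleton_subset_iff.mpr hu,
      .inl ⟨by simp, by simp [Set.subsingleton_singleton.cupOn]⟩⟩
  | succ a iha =>
    induction b generalizing U with
    | zero =>
      obtain ⟨u, hu⟩ := card_pos.mp (lt_of_lt_of_le (by positivity) hU)
      exact ⟨{u}, singleton_subset_iff.mpr hu,
        .inr ⟨by simp, by simp [Set.subsingleton_singleton.capOn]⟩⟩
    | succ b ihb =>
      have h2 : 1 < #U := lt_of_lt_of_le (Nat.one_lt_two_pow (by omega)) hU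
      have hne : U.Nonempty := card_pos.mp (by omega)
      set u := U.min' hne
      set t := U.max' hne
      have hut : x u < x t := hx (min'_mem U hne) (max'_mem U hne) (min'_lt_max'_of_card U h2)
      have hxu : ∀ c ∈ U, x u ≤ x c := fun c hc =>
        hx.monotoneOn (min'_mem U hne) hc (min'_le U c hc)
      have hxt : ∀ c ∈ U, x c ≤ x t := fun c hc =>
        hx.monotoneOn hc (max'_mem U hne) (le_max' U c hc)
      have hsplit := card_filter_add_card_filter_not (s := U) (fun c => 2 * x c ≤ x u + x t)
      rcases le_or_gt (2 ^ (a + (b + 1))) #(U.filter (fun c => 2 * x c ≤ x u + x t)) with hL | hL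
      · obtain ⟨s, hsL, hs | hs⟩ := iha (b + 1) (hx.mono (coe_subset.mpr (filter_subset _ _))) hL
        · have hsU : s ⊆ U := hsL.trans (filter_subset _ _)
          obtain ⟨hts, hcup⟩ := hs.2.insert_of_two_mul_le (fun c hc => hxu c (hsU hc))
            (fun c hc => le_max' U c (hsU hc)) (fun c hc => (mem_filter.mp (hsL hc)).2) hut
          refine ⟨insert t s, insert_subset (max'_mem U hne) hsU, .inl ⟨?_, hcup⟩⟩
          rw [card_insert_of_notMem hts]
          omega
        · exact ⟨s, hsL.trans (filter_subset _ _), .inr hs⟩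
      · have hR : 2 ^ (a + 1 + b) ≤ #(U.filter fun c => ¬ 2 * x c ≤ x u + x t) := by
          rw [show a + (b + 1) = a + 1 + b by omega] at hL
          rw [show a + 1 + (b + 1) = a + 1 + b + 1 by omega, pow_succ] at hU
          omega
        obtain ⟨s, hsR, hs | hs⟩ := ihb (hx.mono (coe_subset.mpr (filter_subset _ _))) hR
        · exact ⟨s, hsR.trans (filter_subset _ _), .inl hs⟩
        · have hsU : s ⊆ U := hsR.trans (filter_subset _ _)
          obtain ⟨hus, hcap⟩ := hs.2.insert_of_le_two_mul (fun c hc => hxt c (hsU hc))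
            (fun c hc => min'_le U c (hsU hc))
            (fun c hc => (not_le.mp (mem_filter.mp (hsR hc)).2).le) hut
          refine ⟨insert u s, insert_subset (min'_mem U hne) hsU, .inr ⟨?_, hcap⟩⟩
          rw [card_insert_of_notMem hus]
          omega

def CupCapSet {q : ℕ} (x : Fin q → ι → ℝ) (k a : ℕ) (s : Finset ι) : Prop :=
  (a ≤ #s ∧ ∀ r, CupOn (x r) s) ∨ (a ≤ #s ∧ ∀ r, CapOn (x r) s) ∨
    (k ≤ #s ∧ ∀ r, CupOn (x r) s ∨ CapOn (x r) s)

section CupCapSet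

variable {q k a : ℕ} {x : Fin q → ι → ℝ} {s : Finset ι}

theorem CupCapSet.le_card_and_cupOn_or_capOn (h : CupCapSet x k k s) :
    k ≤ #s ∧ ∀ r, CupOn (x r) s ∨ CapOn (x r) s := by
  rcases h with ⟨hk, h⟩ | ⟨hk, h⟩ | h
  exacts [⟨hk, fun r => .inl (h r)⟩, ⟨hk, fun r => .inr (h r)⟩, h]

theorem CupCapSet.image {f : κ → ι} (hf : StrictMono f) {s : Finset κ}
    (h : CupCapSet (fun r => x r ∘ f) k a s) : CupCapSet x k a (s.image f) := by
  rw [CupCapSet, card_image_of_injective _ hf.injective, coe_image]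
  rcases h with ⟨ha, h⟩ | ⟨ha, h⟩ | ⟨hk, h⟩
  · exact .inl ⟨ha, fun r => (h r).image hf⟩
  · exact .inr (.inl ⟨ha, fun r => (h r).image hf⟩)
  · exact .inr (.inr ⟨hk, fun r => (h r).imp (·.image hf) (·.image hf)⟩)

theorem CupCapSet.of_succAbove {x : Fin (q + 1) → ι → ℝ} {r : Fin (q + 1)} {E : Finset ι}
    (hr : CupOn (x r) E ∨ CapOn (x r) E) (hsE : s ⊆ E)
    (hs : CupCapSet (fun r' => x (r.succAbove r')) k k s) : CupCapSet x k a s := by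
  obtain ⟨hk, hs⟩ := hs.le_card_and_cupOn_or_capOn
  refine .inr (.inr ⟨hk, fun r' => ?_⟩)
  rcases Fin.eq_self_or_eq_succAbove r r' with rfl | ⟨r'', rfl⟩
  · exact hr.imp (·.mono (coe_subset.mpr hsE)) (·.mono (coe_subset.mpr hsE))
  · exact hs r''

end CupCapSet

theorem exists_subset_cupCapSet_of_fin {q k a B : ℕ}
    (h : ∀ n (y : Fin q → Fin n → ℝ), (∀ r, StrictMono (y r)) → B < n →
      ∃ s : Finset (Fin n), CupCapSet y k a s)
    (x : Fin q → ι → ℝ) (U : Finset ι) (hx : ∀ r, StrictMonoOn (x r) U) (hU : B < #U) :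
    ∃ s ⊆ U, CupCapSet x k a s := by
  set e := U.orderEmbOfFin rfl
  obtain ⟨s, hs⟩ := h #U (fun r => x r ∘ e) (fun r _ _ hij =>
    hx r (U.orderEmbOfFin_mem rfl _) (U.orderEmbOfFin_mem rfl _) (e.strictMono hij)) hU
  refine ⟨s.image e, fun b hb => ?_, hs.image e.strictMono⟩
  obtain ⟨i, -, rfl⟩ := mem_image.mp hb
  exact U.orderEmbOfFin_mem rfl i

structure BlockLayout (ι : Type*) [LinearOrder ι] (T : ℕ) where
  first : ι
  last : ι
  lo : Fin T → ι
  hi : Fin T → ι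
  first_lt_lo : ∀ j, first < lo j
  lo_le_hi : ∀ j, lo j ≤ hi j
  hi_lt_last : ∀ j, hi j < last
  hi_lt_lo : ∀ {i j}, i < j → hi i < lo j

namespace BlockLayout

variable {T : ℕ} (L : BlockLayout ι T)

theorem strictMono_lo : StrictMono L.lo := fun _ _ h => (L.lo_le_hi _).trans_lt (L.hi_lt_lo h)

theorem strictMono_hi : StrictMono L.hi := fun _ _ h => (L.hi_lt_lo h).trans_le (L.lo_le_hi _)

def GapBelow (y : ι → ℝ) (j : Fin T) : Prop :=
  y (L.hi j) - y (L.lo j) ≤ y (L.lo j) - y L.first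

def GapAbove (y : ι → ℝ) (j : Fin T) : Prop :=
  y (L.hi j) - y (L.lo j) ≤ y L.last - y (L.hi j)

variable {L}

theorem exists_cupCapSet_succ {q k a : ℕ} {x : Fin q → ι → ℝ} (hx : ∀ r, StrictMono (x r))
    {j : Fin T} (hj : ∀ r, L.GapBelow (x r) j ∧ L.GapAbove (x r) j) {s : Finset ι}
    (hsj : ∀ b ∈ s, L.lo j ≤ b ∧ b ≤ L.hi j) (hs : CupCapSet x k a s) :
    ∃ s', CupCapSet x k (a + 1) s' := by
  have hbd : ∀ r, ∀ b ∈ (s : Set ι), x r (L.lo j) ≤ x r b ∧ x r b ≤ x r (L.hi j) :=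
    fun r b hb => ⟨(hx r).monotone (hsj b hb).1, (hx r).monotone (hsj b hb).2⟩
  rcases hs with ⟨ha, hcup⟩ | ⟨ha, hcap⟩ | hmixed
  · have hlast : ∀ b ∈ (s : Set ι), b < L.last := fun b hb => (hsj b hb).2.trans_lt (L.hi_lt_last j)
    refine ⟨insert L.last s, .inl ⟨?_, fun r => ?_⟩⟩
    · rw [card_insert_of_notMem fun h => lt_irrefl _ (hlast _ h)]
      omega
    · rw [coe_insert]
      exact (hcup r).insert_of_gap hlast (hbd r) (hj r).2
  · have hfirst : ∀ b ∈ (s : Set ι), L.first < b :=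
      fun b hb => (L.first_lt_lo j).trans_le (hsj b hb).1
    refine ⟨insert L.first s, .inr (.inl ⟨?_, fun r => ?_⟩)⟩
    · rw [card_insert_of_notMem fun h => lt_irrefl _ (hfirst _ h)]
      omega
    · rw [coe_insert]
      exact (hcap r).insert_of_gap hfirst (hbd r) (hj r).1
  · exact ⟨s, .inr (.inr hmixed)⟩

theorem cupOn_image_lo {y : ι → ℝ} (hy : StrictMono y) {J : Set (Fin T)}
    (hJ : ∀ j ∈ J, ¬ L.GapBelow y j) : CupOn y (L.lo '' J) := by
  refine CupOn.image L.strictMono_lo fun i _ j hj m _ _ hjm => ?_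
  have h1 := hy (L.first_lt_lo i)
  have h2 := hy (L.hi_lt_lo hjm)
  have h3 := not_le.mp (hJ j hj)
  simp only [Function.comp]
  linarith

theorem capOn_image_hi {y : ι → ℝ} (hy : StrictMono y) {J : Set (Fin T)}
    (hJ : ∀ j ∈ J, ¬ L.GapAbove y j) : CapOn y (L.hi '' J) := by
  refine CapOn.image L.strictMono_hi fun i _ j hj m _ hij _ => ?_
  have h1 := hy (L.hi_lt_last m)
  have h2 := hy (L.hi_lt_lo hij)
  have h3 := not_le.mp (hJ j hj)
  simp only [Function.comp]
  linarith

theorem exists_cupOn_or_capOn_row {q : ℕ} {x : Fin q → ι → ℝ} (hx : ∀ r, StrictMono (x r))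
    (hstuck : ∀ j, ¬ ∀ r, L.GapBelow (x r) j ∧ L.GapAbove (x r) j) {B : ℕ} (hT : 2 * q * B < T) :
    ∃ E : Finset ι, B < #E ∧ ∃ r, CupOn (x r) E ∨ CapOn (x r) E := by
  have : ∀ j, ∃ p : Fin q × Bool,
      cond p.2 (¬ L.GapAbove (x p.1) j) (¬ L.GapBelow (x p.1) j) := by
    intro j
    obtain ⟨r, hr⟩ := not_forall.mp (hstuck j)
    by_cases hb : L.GapBelow (x r) j
    · exact ⟨(r, true), fun h => hr ⟨hb, h⟩⟩
    · exact ⟨(r, false), hb⟩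
  choose p hp using this
  obtain ⟨⟨r, side⟩, hJ⟩ := Fintype.exists_lt_card_fiber_of_mul_lt_card p
    (by simpa [mul_comm] using hT)
  have hside : ∀ j ∈ ({j | p j = (r, side)} : Finset (Fin T)),
      cond side (¬ L.GapAbove (x r) j) (¬ L.GapBelow (x r) j) := by
    intro j hj
    simpa [(mem_filter.mp hj).2] using hp j
  cases side
  · refine ⟨_, (card_image_of_injective _ L.strictMono_lo.injective).symm ▸ hJ, r, .inl ?_⟩
    rw [coe_image]
    exact cupOn_image_lo (hx r) hside
  · refine ⟨_, (card_image_of_injective _ L.strictMono_hi.injective).symm ▸ hJ, r, .inr ?_⟩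
    rw [coe_image]
    exact capOn_image_hi (hx r) hside

def ofFin {n T s : ℕ} (hn : T * (s + 1) + 1 < n) : BlockLayout (Fin n) T where
  first := ⟨0, by omega⟩
  last := ⟨T * (s + 1) + 1, hn⟩
  lo j := ⟨j * (s + 1) + 1, by nlinarith [j.2]⟩
  hi j := ⟨j * (s + 1) + s + 1, by nlinarith [j.2]⟩
  first_lt_lo j := by simp [Fin.lt_def]
  lo_le_hi j := by simp [Fin.le_def]
  hi_lt_last j := by simp only [Fin.lt_def]; nlinarith [j.2]
  hi_lt_lo {i j} h := by simp only [Fin.lt_def] at h ⊢; nlinarith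

theorem card_Icc_ofFin {n T s : ℕ} (hn : T * (s + 1) + 1 < n) (j : Fin T) :
    #(Icc ((ofFin hn).lo j) ((ofFin hn).hi j)) = s + 1 := by
  simp only [ofFin, Fin.card_Icc]
  omega

end BlockLayout

/-- `T` blocks of `stepBound T a + 1` columns, and a first and a last column. -/
def stepBound (T : ℕ) : ℕ → ℕ
  | 0 => 0
  | a + 1 => T * (stepBound T a + 1) + 1

def cupcapBound : ℕ → ℕ → ℕ → ℕ
  | 0, _, a => a
  | 1, _, a => 2 ^ (a + a)
  | q + 2, k, a => stepBound (2 * (q + 2) * cupcapBound (q + 1) k k + 1) a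

theorem exists_cupCapSet_of_blocks {q k a : ℕ}
    (ihq : ∀ n (y : Fin (q + 1) → Fin n → ℝ), (∀ r, StrictMono (y r)) →
      cupcapBound (q + 1) k k < n → ∃ s : Finset (Fin n), CupCapSet y k k s)
    (iha : ∀ n (y : Fin (q + 2) → Fin n → ℝ), (∀ r, StrictMono (y r)) →
      cupcapBound (q + 2) k a < n → ∃ s : Finset (Fin n), CupCapSet y k a s)
    {n : ℕ} (x : Fin (q + 2) → Fin n → ℝ) (hx : ∀ r, StrictMono (x r))
    (hn : cupcapBound (q + 2) k (a + 1) < n) : ∃ s, CupCapSet x k (a + 1) s := by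
  have hn' : (2 * (q + 2) * cupcapBound (q + 1) k k + 1) * (cupcapBound (q + 2) k a + 1) + 1 < n :=
    hn
  have hcard := BlockLayout.card_Icc_ofFin hn'
  generalize BlockLayout.ofFin hn' = L at hcard
  by_cases hgaps : ∃ j, ∀ r, L.GapBelow (x r) j ∧ L.GapAbove (x r) j
  · obtain ⟨j, hj⟩ := hgaps
    obtain ⟨s, hsj, hs⟩ := exists_subset_cupCapSet_of_fin iha x (Icc (L.lo j) (L.hi j))
      (fun r => (hx r).strictMonoOn _) (by rw [hcard]; omega)
    exact BlockLayout.exists_cupCapSet_succ hx hj (fun b hb => mem_Icc.mp (hsj hb)) hs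
  · obtain ⟨E, hE, r, hr⟩ := BlockLayout.exists_cupOn_or_capOn_row hx (not_exists.mp hgaps)
      (Nat.lt_succ_self _)
    obtain ⟨s, hsE, hs⟩ := exists_subset_cupCapSet_of_fin ihq (fun r' => x (r.succAbove r')) E
      (fun r' => (hx _).strictMonoOn _) hE
    exact ⟨s, hs.of_succAbove hr hsE⟩

theorem exists_cupCapSet : ∀ (q k a n : ℕ) (x : Fin q → Fin n → ℝ), (∀ r, StrictMono (x r)) →
    cupcapBound q k a < n → ∃ s : Finset (Fin n), CupCapSet x k a s
  | 0, _, a, n, _, _, hn =>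
    ⟨univ, .inl ⟨by rw [card_univ, Fintype.card_fin]; exact hn.le, fun r => r.elim0⟩⟩
  | 1, _, a, n, x, hx, hn => by
    have hn : 2 ^ (a + a) < n := hn
    obtain ⟨s, -, hs | hs⟩ := exists_cupOn_or_capOn (x 0) a a (U := univ)
      ((hx 0).strictMonoOn _) (by simpa using hn.le)
    · exact ⟨s, .inl ⟨by omega, fun r => Subsingleton.elim r 0 ▸ hs.2⟩⟩
    · exact ⟨s, .inr (.inl ⟨by omega, fun r => Subsingleton.elim r 0 ▸ hs.2⟩)⟩
  | q + 2, k, a, n, x, hx, hn => by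
    induction a generalizing n with
    | zero => exact ⟨∅, .inl ⟨Nat.zero_le _, fun r => by simp [Set.subsingleton_empty.cupOn]⟩⟩
    | succ a iha => exact exists_cupCapSet_of_blocks (exists_cupCapSet (q + 1) k k) iha x hx hn

theorem stepBound_lt {T : ℕ} (hT : 1 ≤ T) (a : ℕ) : stepBound T a < (3 * T) ^ a := by
  induction a with
  | zero => simp [stepBound]
  | succ a ih =>
    have hP : 1 ≤ T * (3 * T) ^ a := Nat.one_le_iff_ne_zero.mpr (by positivity)
    calc stepBound T (a + 1) = T * (stepBound T a + 1) + 1 := rfl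
      _ ≤ T * (3 * T) ^ a + 1 := by gcongr; exact ih
      _ < (3 * T) ^ (a + 1) := by rw [pow_succ]; nlinarith

theorem exists_cupcapBound_lt_two_pow {q : ℕ} (hq : 1 ≤ q) :
    ∃ E, ∀ k, 1 ≤ k → cupcapBound q k k < 2 ^ (E * k ^ q) := by
  induction q, hq using Nat.le_induction with
  | base => exact ⟨3, fun k hk => Nat.pow_lt_pow_right one_lt_two (by simp; omega)⟩
  | succ q hq ih =>
    obtain ⟨p, rfl⟩ : ∃ p, q = p + 1 := ⟨q - 1, by omega⟩
    obtain ⟨E, hE⟩ := ih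
    refine ⟨E + p + 4, fun k hk => ?_⟩
    set B := cupcapBound (p + 1) k k
    set T := 2 * (p + 2) * B + 1
    have hB : B + 1 ≤ 2 ^ (E * k ^ (p + 1)) := hE k hk
    have hp : p + 2 ≤ 2 * 2 ^ p := by have := Nat.lt_two_pow_self (n := p); omega
    have h3T : 3 * T ≤ 2 ^ (p + 4 + E * k ^ (p + 1)) := by
      calc 3 * T ≤ 8 * (p + 2) * (B + 1) := by simp only [T]; nlinarith
        _ ≤ 8 * (2 * 2 ^ p) * 2 ^ (E * k ^ (p + 1)) := by gcongr
        _ = _ := by ring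
    have hexp : (p + 4 + E * k ^ (p + 1)) * k ≤ (E + p + 4) * k ^ (p + 2) := by
      have hk' : k ≤ k ^ (p + 2) := Nat.le_self_pow (by omega) k
      calc (p + 4 + E * k ^ (p + 1)) * k = (p + 4) * k + E * k ^ (p + 2) := by ring
        _ ≤ (p + 4) * k ^ (p + 2) + E * k ^ (p + 2) := by gcongr
        _ = _ := by ring
    calc cupcapBound (p + 2) k k = stepBound T k := rfl
      _ < (3 * T) ^ k := stepBound_lt (by omega) k
      _ ≤ (2 ^ (p + 4 + E * k ^ (p + 1))) ^ k := Nat.pow_le_pow_left h3T k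
      _ ≤ 2 ^ ((E + p + 4) * k ^ (p + 2)) := by
        rw [← pow_mul]; exact Nat.pow_le_pow_right two_pos hexp

theorem exists_subset_cupcap {q : ℕ} (x : Fin q → ι → ℝ) (U : Finset ι)
    (hx : ∀ r, Set.InjOn (x r) U) {k : ℕ} (hU : cupcapBound q k k ^ 2 ^ q < #U) :
    ∃ s ⊆ U, k ≤ #s ∧
      ∀ r, (StrictMonoOn (x r) s ∨ StrictAntiOn (x r) s) ∧ (CupOn (x r) s ∨ CapOn (x r) s) := by
  obtain ⟨V, hVU, hV, hVx⟩ := exists_subset_forall_strictMonoOn_or_strictAntiOn x hx hU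
  have : ∀ r, ∃ y : ι → ℝ, StrictMonoOn y V ∧ (y = x r ∨ y = -x r) := fun r =>
    (hVx r).elim (fun h => ⟨x r, h, .inl rfl⟩) (fun h => ⟨-x r, h.neg, .inr rfl⟩)
  choose y hy hyx using this
  obtain ⟨s, hsV, hs⟩ := exists_subset_cupCapSet_of_fin (exists_cupCapSet q k k) y V hy hV
  obtain ⟨hk, hys⟩ := hs.le_card_and_cupOn_or_capOn
  have hsV' : (s : Set ι) ⊆ V := coe_subset.mpr hsV
  refine ⟨s, hsV.trans hVU, hk, fun r => ⟨(hVx r).imp (·.mono hsV') (·.mono hsV'), ?_⟩⟩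
  have hyr := hys r
  rcases hyx r with h | h
  · rwa [h] at hyr
  · rwa [h, cupOn_neg, capOn_neg, or_comm] at hyr

theorem exists_strictMono_cupcap_of_le_card {q k : ℕ} {x : Fin q → ι → ℝ} {s : Finset ι}
    (hk : k ≤ #s)
    (hs : ∀ r, (StrictMonoOn (x r) s ∨ StrictAntiOn (x r) s) ∧ (CupOn (x r) s ∨ CapOn (x r) s)) :
    ∃ g : Fin k → ι, StrictMono g ∧
      ∀ r, (StrictMono (fun j => x r (g j)) ∨ StrictAnti (fun j => x r (g j))) ∧
        (IsCup (fun j => x r (g j)) ∨ IsCap (fun j => x r (g j))) := by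
  obtain ⟨t, hts, ht⟩ := exists_subset_card_eq hk
  set g := t.orderEmbOfFin ht
  have hg : ∀ j, g j ∈ (s : Set ι) := fun j => hts (t.orderEmbOfFin_mem ht j)
  refine ⟨g, g.strictMono, fun r => ⟨(hs r).1.imp ?_ ?_, (hs r).2.imp ?_ ?_⟩⟩
  · exact fun h i j hij => h (hg i) (hg j) (g.strictMono hij)
  · exact fun h i j hij => h (hg i) (hg j) (g.strictMono hij)
  · exact fun h i j l hij hjl => h (hg i) (hg j) (hg l) (g.strictMono hij) (g.strictMono hjl)
  · exact fun h i j l hij hjl => h (hg i) (hg j) (hg l) (g.strictMono hij) (g.strictMono hjl)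

/-- `k = ⌊x⌋₊` for `x = (log N / ((G + 1) log 2)) ^ (1 / q)`, or `k ≤ 1` when `x < 1`. -/
theorem exists_pos_mul_rpow_log_le (G : ℕ) {q : ℕ} (hq : 1 ≤ q) :
    ∃ c : ℝ, 0 < c ∧ ∀ N : ℕ, ∃ k : ℕ, c * Real.log N ^ ((1 : ℝ) / q) ≤ k ∧
      ((k ≤ 1 ∧ k ≤ N) ∨ (1 ≤ k ∧ 2 ^ (G * k ^ q) ≤ N)) := by
  set D : ℝ := (G + 1) * Real.log 2
  have hD : 0 < D := by positivity
  refine ⟨1 / (2 * D ^ ((1 : ℝ) / q)), by positivity, fun N => ?_⟩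
  rcases Nat.lt_or_ge N 2 with hN | hN
  · refine ⟨N, ?_, .inl ⟨by omega, le_rfl⟩⟩
    have : Real.log N = 0 := by interval_cases N <;> simp
    rw [this, Real.zero_rpow (by positivity)]
    simp
  have hL : 0 < Real.log N := Real.log_pos (by exact_mod_cast hN)
  set x := (Real.log N / D) ^ ((1 : ℝ) / q) with hx_def
  have hcx : 1 / (2 * D ^ ((1 : ℝ) / q)) * Real.log N ^ ((1 : ℝ) / q) = x / 2 := by
    rw [hx_def, Real.div_rpow hL.le hD.le]
    field_simp
  rw [hcx]
  rcases lt_or_ge x 1 with hx | hx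
  · exact ⟨1, by push_cast; linarith, .inl ⟨le_rfl, by omega⟩⟩
  have hk : 1 ≤ ⌊x⌋₊ := Nat.le_floor (by simpa using hx)
  refine ⟨⌊x⌋₊, ?_, .inr ⟨hk, ?_⟩⟩
  · have : (1 : ℝ) ≤ ⌊x⌋₊ := by exact_mod_cast hk
    linarith [Nat.lt_floor_add_one x]
  have hkx : (⌊x⌋₊ : ℝ) ^ q * D ≤ Real.log N := by
    rw [← le_div_iff₀ hD]
    calc (⌊x⌋₊ : ℝ) ^ q ≤ x ^ q := pow_le_pow_left₀ (by positivity) (Nat.floor_le (by positivity)) q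
      _ = Real.log N / D := by
        rw [hx_def, one_div, Real.rpow_inv_natCast_pow (by positivity) (by omega)]
  have : ((2 ^ (G * ⌊x⌋₊ ^ q) : ℕ) : ℝ) ≤ N := by
    rw [Nat.cast_pow, Nat.cast_ofNat, Real.pow_le_iff_le_log two_pos (by positivity)]
    push_cast
    nlinarith [Real.log_pos one_lt_two, pow_nonneg (Nat.cast_nonneg (α := ℝ) ⌊x⌋₊) q]
  exact_mod_cast this

end CupCap

open CupCap in
/-- For every `q ≥ 1`, there is `c = c(q) > 0` such that every `q × N` real matrix with
no repeated elements in any row contains a `q × N'` cupcap submatrix with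
`N' ≥ c (log N)^(1/q)`. -/
theorem cupcap_submatrix (q : ℕ) (hq : 1 ≤ q) :
    ∃ c : ℝ, 0 < c ∧ ∀ N : ℕ, ∀ M : Fin q → Fin N → ℝ,
      (∀ i, Function.Injective (M i)) →
      ∃ N' : ℕ, c * Real.log N ^ ((1 : ℝ) / q) ≤ N' ∧
        ∃ g : Fin N' → Fin N, StrictMono g ∧
          ∀ i, (StrictMono (fun j => M i (g j)) ∨ StrictAnti (fun j => M i (g j))) ∧
            (IsCup (fun j => M i (g j)) ∨ IsCap (fun j => M i (g j))) := by
  obtain ⟨E, hE⟩ := exists_cupcapBound_lt_two_pow hq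
  obtain ⟨c, hc, hcN⟩ := exists_pos_mul_rpow_log_le (E * 2 ^ q) hq
  refine ⟨c, hc, fun N M hM => ?_⟩
  obtain ⟨k, hck, hk⟩ := hcN N
  obtain ⟨s, hk, hs⟩ : ∃ s : Finset (Fin N), k ≤ #s ∧ ∀ i,
      (StrictMonoOn (M i) s ∨ StrictAntiOn (M i) s) ∧ (CupOn (M i) s ∨ CapOn (M i) s) := by
    rcases hk with ⟨hk1, hkN⟩ | ⟨hk1, hkN⟩
    · obtain ⟨s, -, hs⟩ := exists_subset_card_eq (s := (univ : Finset (Fin N))) (by simpa using hkN)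
      have hsub : (s : Set (Fin N)).Subsingleton := fun _ ha _ hb =>
        card_le_one_iff.mp (hs ▸ hk1) ha hb
      exact ⟨s, hs.ge, fun i => ⟨.inl (hsub.strictMonoOn _), .inl hsub.cupOn⟩⟩
    · have hbound : cupcapBound q k k ^ 2 ^ q < #(univ : Finset (Fin N)) := by
        calc cupcapBound q k k ^ 2 ^ q < (2 ^ (E * k ^ q)) ^ 2 ^ q :=
              Nat.pow_lt_pow_left (hE k hk1) (by positivity)
          _ = 2 ^ (E * 2 ^ q * k ^ q) := by rw [← pow_mul]; ring_nf
          _ ≤ #(univ : Finset (Fin N)) := by simpa using hkN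
      obtain ⟨s, -, hs⟩ := exists_subset_cupcap M univ (fun i => (hM i).injOn) hbound
      exact ⟨s, hs⟩
  exact ⟨k, hck, exists_strictMono_cupcap_of_le_card hk hs⟩
end

section
/- For every integer k ≥ 1 and every k-tuple of positive integers r₁,…,r_k there exist, for infinitely many N, row-increasing matrices P_ℓ ∈ ℤ^{r_ℓ×N} and integer thresholds h_ℓ (ℓ ∈ [k]) such that any set C ⊆ [N] that is a monochromatic clique in the domination hypergraph of (P_ℓ, h_ℓ) for every ℓ satisfies |C| < R·N^{1/(R−k+1)} + 2R, where R = r₁ + ⋯ + r_k. -/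
/-- In the domination hypergraph of `(P, h)`, the edge given by the increasing tuple `q`
has color `c` (where `none` is color `0` and `some j` is color `j`). -/
def EdgeColor {r N : ℕ} (P : Fin r → Fin N → ℤ) (h : ℤ) (q : Fin r → Fin N) :
    Option (Fin r) → Prop
  | none => ∀ i, P i (q i) ≤ h
  | some j => h + 4 ≤ P j (q j) ∧ ∀ i, i ≠ j → 2 + P i (q i) ≤ P j (q j)

/-- `C` is a monochromatic clique in the domination hypergraph of `(P, h)`. -/
def MonoClique {r N : ℕ} (P : Fin r → Fin N → ℤ) (h : ℤ) (C : Finset (Fin N)) : Prop :=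
  ∃ c : Option (Fin r), ∀ q : Fin r → Fin N, StrictMono q → (∀ i, q i ∈ C) →
    EdgeColor P h q c


def EAux {N : ℕ} (C : Finset (Fin N)) : ℕ → ℤ :=
  fun t => if ht : t < C.card then ((C.orderEmbOfFin rfl ⟨t, ht⟩ : Fin N) : ℕ) else 0

lemma EAux_nonneg {N : ℕ} (C : Finset (Fin N)) (t : ℕ) : 0 ≤ EAux C t := by
  unfold EAux; split <;> positivity

lemma EAux_lt {N : ℕ} (C : Finset (Fin N)) (t : ℕ) (ht : t < C.card) :
    EAux C t < N := by
  unfold EAux; rw [dif_pos ht]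
  exact_mod_cast (C.orderEmbOfFin rfl ⟨t, ht⟩).isLt

lemma EAux_mono {N : ℕ} (C : Finset (Fin N)) {a b : ℕ} (hab : a ≤ b) (hb : b < C.card) :
    EAux C a ≤ EAux C b := by
  unfold EAux
  rw [dif_pos hb, dif_pos (lt_of_le_of_lt hab hb)]
  have := (C.orderEmbOfFin rfl).monotone (a := ⟨a, lt_of_le_of_lt hab hb⟩) (b := ⟨b, hb⟩)
    (by exact hab)
  exact_mod_cast this

lemma EAux_strict {N : ℕ} (C : Finset (Fin N)) {t : ℕ} (h0 : 0 < t) (ht : t < C.card) :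
    EAux C (t-1) + 1 ≤ EAux C t := by
  unfold EAux
  rw [dif_pos ht, dif_pos (by omega : t - 1 < C.card)]
  have := (C.orderEmbOfFin rfl).strictMono (a := ⟨t-1, by omega⟩) (b := ⟨t, ht⟩)
    (by simp [Fin.lt_def]; omega)
  rw [Fin.lt_def] at this
  omega

lemma tele (f : ℕ → ℤ) (step : ℤ) (a : ℕ) :
    ∀ b, a ≤ b → (∀ t, a < t → t ≤ b → f (t-1) + step ≤ f t) →
      f a + ((b - a : ℕ) : ℤ) * step ≤ f b := by
  intro b
  induction b with
  | zero => intro hab _; interval_cases a; simp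
  | succ b ih =>
    intro hab hstep
    rcases Nat.eq_or_lt_of_le hab with h | h
    · subst h; simp
    · have hab' : a ≤ b := by omega
      have h1 := ih hab' (fun t ht1 ht2 => hstep t ht1 (by omega))
      have h2 := hstep (b+1) (by omega) le_rfl
      have h3 : ((b + 1 - a : ℕ) : ℤ) = ((b - a : ℕ) : ℤ) + 1 := by omega
      rw [h3]
      have h4 : b + 1 - 1 = b := by omega
      rw [h4] at h2
      linarith

lemma pair_ineq {N rl : ℕ} (D : ℕ → ℤ) (C : Finset (Fin N)) (jf i : Fin rl)
    (hc : ∀ q : Fin rl → Fin N, StrictMono q → (∀ p, q p ∈ C) →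
      EdgeColor (fun i q => ((q : ℕ) : ℤ) - D (i : ℕ)) (-1) q (some jf))
    (u : Fin rl → ℕ) (hu : StrictMono u) (hub : ∀ p, u p < C.card) (hne : i ≠ jf) :
    2 + (EAux C (u i) - D (i : ℕ)) ≤ EAux C (u jf) - D (jf : ℕ) := by
  have hq : StrictMono (fun p : Fin rl => C.orderEmbOfFin rfl ⟨u p, hub p⟩) := by
    intro a b hab
    exact (C.orderEmbOfFin rfl).strictMono (Fin.mk_lt_mk.mpr (hu hab))
  have he := hc _ hq (fun p => Finset.orderEmbOfFin_mem C rfl _)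
  obtain ⟨-, h2⟩ := he
  have h3 := h2 i hne
  unfold EAux
  rw [dif_pos (hub i), dif_pos (hub jf)]
  exact h3

def rrAux (k : ℕ) (r : Fin k → ℕ) : ℕ → ℕ := fun i => if h : i < k then r ⟨i, h⟩ else 1

def SnAux (k : ℕ) (r : Fin k → ℕ) : ℕ → ℕ := fun t => ∑ i ∈ Finset.range t, (rrAux k r i - 1)

def DAux (k : ℕ) (r : Fin k → ℕ) (n : ℕ) (l : Fin k) (j : ℕ) : ℤ :=
  ∑ t ∈ Finset.range j, (n : ℤ) ^ (SnAux k r (l : ℕ) + t + 1)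

lemma DAux_succ (k : ℕ) (r : Fin k → ℕ) (n : ℕ) (l : Fin k) (j : ℕ) :
    DAux k r n l (j + 1) = DAux k r n l j + (n : ℤ) ^ (SnAux k r (l : ℕ) + j + 1) :=
  Finset.sum_range_succ _ _

lemma keyAux {k N : ℕ} (r : Fin k → ℕ) (n : ℕ) (R : ℕ) (C : Finset (Fin N)) (l : Fin k)
    (hrR : r l ≤ R) (hR2 : 2 ≤ R) (hs : 2 * R + 2 ≤ C.card) (hrl : 1 ≤ r l)
    (hmc : MonoClique (fun (i : Fin (r l)) (q : Fin N) => ((q : ℕ) : ℤ) - DAux k r n l (i : ℕ))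
      (-1) C) :
    ∃ j : ℕ, j < r l ∧
      (1 ≤ j → ∀ t : ℕ, R < t → t ≤ C.card - R →
        EAux C (t - 1) + (n : ℤ) ^ (SnAux k r (l : ℕ) + j) ≤ EAux C t) ∧
      (j + 1 < r l →
        EAux C (C.card - R) - EAux C R ≤ (n : ℤ) ^ (SnAux k r (l : ℕ) + j + 1)) := by
  obtain ⟨c, hc⟩ := hmc
  match c with
  | none =>
    exfalso
    have hq : StrictMono (fun p : Fin (r l) =>
        C.orderEmbOfFin rfl ⟨(p : ℕ), by have := p.isLt; omega⟩) := by
      intro a b hab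
      exact (C.orderEmbOfFin rfl).strictMono (Fin.mk_lt_mk.mpr hab)
    have he := hc _ hq (fun p => Finset.orderEmbOfFin_mem C rfl _)
    have h0 := he ⟨0, by omega⟩
    simp only [DAux, SnAux, Finset.range_zero, Finset.sum_empty] at h0
    have : (0 : ℤ) ≤ ((C.orderEmbOfFin rfl ⟨0, by omega⟩ : Fin N) : ℕ) := Int.natCast_nonneg _
    omega
  | some jf =>
    have hjr : (jf : ℕ) < r l := jf.isLt
    refine ⟨(jf : ℕ), jf.isLt, ?_, ?_⟩
    · -- gap inequality
      intro hj1 t ht1 ht2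
      have h4 := pair_ineq (DAux k r n l) C jf ⟨(jf : ℕ) - 1, by omega⟩ hc
        (fun p => t - (jf : ℕ) + (p : ℕ))
        (fun a b hab => by
          have hab' : (a : ℕ) < (b : ℕ) := hab
          show t - (jf : ℕ) + (a : ℕ) < t - (jf : ℕ) + (b : ℕ)
          omega)
        (fun p => by
          have := p.isLt
          show t - (jf : ℕ) + (p : ℕ) < C.card
          omega)
        (Fin.ne_of_val_ne (by simp; omega))
      have h5 : 2 + (EAux C (t - (jf : ℕ) + ((jf : ℕ) - 1)) - DAux k r n l ((jf : ℕ) - 1)) ≤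
          EAux C (t - (jf : ℕ) + (jf : ℕ)) - DAux k r n l (jf : ℕ) := h4
      clear h4
      have e1 : t - (jf : ℕ) + ((jf : ℕ) - 1) = t - 1 := by omega
      have e2 : t - (jf : ℕ) + (jf : ℕ) = t := by omega
      rw [e1, e2] at h5
      have hD : DAux k r n l (jf : ℕ) =
          DAux k r n l ((jf : ℕ) - 1) + (n : ℤ) ^ (SnAux k r (l : ℕ) + (jf : ℕ)) := by
        conv_lhs => rw [show (jf : ℕ) = ((jf : ℕ) - 1) + 1 from by omega]
        rw [DAux_succ]
        congr 2
        omega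
      rw [hD] at h5
      omega
    · -- window inequality
      intro hj2
      have h4 := pair_ineq (DAux k r n l) C jf ⟨(jf : ℕ) + 1, by omega⟩ hc
        (fun p => if (p : ℕ) ≤ (jf : ℕ) then (p : ℕ) else C.card - r l + (p : ℕ))
        (fun a b hab => by
          have ha := a.isLt; have hb := b.isLt
          have hab' : (a : ℕ) < (b : ℕ) := hab
          show (if (a : ℕ) ≤ (jf : ℕ) then (a : ℕ) else C.card - r l + (a : ℕ)) <
            (if (b : ℕ) ≤ (jf : ℕ) then (b : ℕ) else C.card - r l + (b : ℕ))
          split_ifs <;> omega)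
        (fun p => by
          have := p.isLt
          show (if (p : ℕ) ≤ (jf : ℕ) then (p : ℕ) else C.card - r l + (p : ℕ)) < C.card
          split_ifs <;> omega)
        (Fin.ne_of_val_ne (by simp))
      have h5 : 2 + (EAux C (if (jf : ℕ) + 1 ≤ (jf : ℕ) then (jf : ℕ) + 1
              else C.card - r l + ((jf : ℕ) + 1)) - DAux k r n l ((jf : ℕ) + 1)) ≤
          EAux C (if (jf : ℕ) ≤ (jf : ℕ) then (jf : ℕ) else C.card - r l + (jf : ℕ)) -
            DAux k r n l (jf : ℕ) := h4
      clear h4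
      rw [if_neg (by omega), if_pos (le_refl _), DAux_succ] at h5
      have w1 : EAux C (C.card - R) ≤ EAux C (C.card - r l + ((jf : ℕ) + 1)) :=
        EAux_mono C (by omega) (by omega)
      have w2 : EAux C (jf : ℕ) ≤ EAux C R := EAux_mono C (by omega) (by omega)
      omega

lemma SnAux_last (k : ℕ) (r : Fin k → ℕ) (hr : ∀ l, 1 ≤ r l) :
    SnAux k r k + k = ∑ l, r l := by
  unfold SnAux
  have h1 : ∀ i ∈ Finset.range k, rrAux k r i - 1 + 1 = rrAux k r i := by
    intro i hi
    unfold rrAux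
    rw [dif_pos (Finset.mem_range.mp hi)]
    have := hr ⟨i, Finset.mem_range.mp hi⟩
    omega
  calc (∑ i ∈ Finset.range k, (rrAux k r i - 1)) + k
      = ∑ i ∈ Finset.range k, (rrAux k r i - 1 + 1) := by
        rw [Finset.sum_add_distrib, Finset.sum_const, Finset.card_range, smul_eq_mul, mul_one]
    _ = ∑ i ∈ Finset.range k, rrAux k r i := Finset.sum_congr rfl h1
    _ = ∑ l : Fin k, r l := by
        rw [← Fin.sum_univ_eq_sum_range (fun i => rrAux k r i) k]
        exact Finset.sum_congr rfl fun i _ => by unfold rrAux; rw [dif_pos i.isLt]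

/-- For every `k ≥ 1` and positive `r₁,…,r_k`, for infinitely many `N` there are
row-increasing matrices `P_ℓ ∈ ℤ^(r_ℓ × N)` and thresholds `h_ℓ` such that every common
monochromatic clique `C` of the domination hypergraphs of `(P_ℓ, h_ℓ)` satisfies
`|C| < R N^(1/(R-k+1)) + 2R`, where `R = r₁ + ⋯ + r_k`. -/
theorem domination_mono_clique_sharp (k : ℕ) (hk : 1 ≤ k) (r : Fin k → ℕ)
    (hr : ∀ l, 1 ≤ r l) :
    ∀ N₀ : ℕ, ∃ N : ℕ, N₀ ≤ N ∧
      ∃ P : (l : Fin k) → Fin (r l) → Fin N → ℤ,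
        (∀ l i, StrictMono (P l i)) ∧
        ∃ h : Fin k → ℤ,
          ∀ C : Finset (Fin N), (∀ l, MonoClique (P l) (h l) C) →
            (C.card : ℝ) <
              ((∑ l, r l : ℕ) : ℝ) *
                  (N : ℝ) ^ ((1 : ℝ) / (((∑ l, r l) - k + 1 : ℕ) : ℝ)) +
                2 * ((∑ l, r l : ℕ) : ℝ) := by
  intro N₀
  by_cases hall : ∀ l, r l = 1
  · -- trivial case: all rows single
    refine ⟨N₀ + 1, by omega, fun l i q => ((q : ℕ) : ℤ), ?_, fun _ => -1, ?_⟩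
    · intro l i a b hab
      have h1 : (a : ℕ) < (b : ℕ) := hab
      show ((a : ℕ) : ℤ) < ((b : ℕ) : ℤ)
      exact_mod_cast h1
    · intro C _
      have hsum : ∑ l, r l = k := by simp [hall]
      rw [hsum]
      have hk1 : k - k + 1 = 1 := by omega
      rw [hk1]
      have hcard : C.card ≤ N₀ + 1 := by
        have := Finset.card_le_univ C
        simpa using this
      have hcard' : (C.card : ℝ) ≤ ((N₀ + 1 : ℕ) : ℝ) := by exact_mod_cast hcard
      have hk' : (1 : ℝ) ≤ (k : ℝ) := by exact_mod_cast hk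
      have hM : (0 : ℝ) ≤ ((N₀ + 1 : ℕ) : ℝ) := by positivity
      have hrpow : ((N₀ + 1 : ℕ) : ℝ) ^ ((1 : ℝ) / ((1 : ℕ) : ℝ)) = ((N₀ + 1 : ℕ) : ℝ) := by
        norm_num
      rw [hrpow]
      nlinarith [mul_nonneg (sub_nonneg.mpr hk') hM]
  · -- main case
    push_neg at hall
    obtain ⟨l₀, hne⟩ := hall
    have hl₀ : 2 ≤ r l₀ := by have := hr l₀; omega
    set R := ∑ l, r l with hRdef
    have hR2 : 2 ≤ R := le_trans hl₀
      (Finset.single_le_sum (fun _ _ => Nat.zero_le _) (Finset.mem_univ l₀))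
    have hkR : k ≤ R := by
      calc k = ∑ _l : Fin k, 1 := by simp
        _ ≤ R := Finset.sum_le_sum (fun l _ => hr l)
    have hrR : ∀ l, r l ≤ R := fun l =>
      Finset.single_le_sum (fun _ _ => Nat.zero_le _) (Finset.mem_univ l)
    set m := R - k + 1 with hmdef
    have hm1 : 1 ≤ m := by omega
    set n := N₀ + 2 * R + 2 with hndef
    have hn2 : 2 ≤ n := by omega
    refine ⟨n ^ m, le_trans (by omega) (Nat.le_self_pow (by omega) n),
      fun l i q => ((q : ℕ) : ℤ) - DAux k r n l (i : ℕ), ?_, fun _ => -1, ?_⟩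
    · intro l i a b hab
      have h1 : (a : ℕ) < (b : ℕ) := hab
      have h2 : ((a : ℕ) : ℤ) < ((b : ℕ) : ℤ) := by exact_mod_cast h1
      dsimp only
      omega
    · intro C hC
      have hNcast : ((n ^ m : ℕ) : ℝ) ^ ((1 : ℝ) / ((m : ℕ) : ℝ)) = (n : ℝ) := by
        have h1 : ((n ^ m : ℕ) : ℝ) = (n : ℝ) ^ ((m : ℕ) : ℝ) := by
          rw [Nat.cast_pow, Real.rpow_natCast]
        rw [h1, ← Real.rpow_mul (by positivity), mul_one_div,
          div_self (by exact_mod_cast (by omega : m ≠ 0) : ((m : ℕ) : ℝ) ≠ 0),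
          Real.rpow_one]
      rw [hNcast]
      have hmain : C.card < R * n + 2 * R := by
        by_contra hcon
        push_neg at hcon
        have h4n : 4 ≤ R * n := Nat.mul_le_mul hR2 hn2
        have hs : 2 * R + 2 ≤ C.card := by omega
        have hkey := fun l => keyAux r n R C l (hrR l) hR2 hs (hr l) (hC l)
        choose j hjlt hgap hwin using hkey
        set X := EAux C (C.card - R) - EAux C R with hX
        have base_gap : ((C.card - 2 * R : ℕ) : ℤ) ≤ X := by
          have h5 := tele (EAux C) 1 R (C.card - R) (by omega)
            (fun t ht1 ht2 => EAux_strict C (by omega) (by omega))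
          have e : C.card - R - R = C.card - 2 * R := by omega
          rw [e, mul_one] at h5
          omega
        have gapX : ∀ l : Fin k, 1 ≤ j l →
            ((C.card - 2 * R : ℕ) : ℤ) * (n : ℤ) ^ (SnAux k r (l : ℕ) + j l) ≤ X := by
          intro l hj
          have h5 := tele (EAux C) ((n : ℤ) ^ (SnAux k r (l : ℕ) + j l)) R (C.card - R)
            (by omega) (hgap l hj)
          have e : C.card - R - R = C.card - 2 * R := by omega
          rw [e] at h5
          omega
        have winm : X ≤ (n : ℤ) ^ m := by
          have h1 : EAux C (C.card - R) < ((n ^ m : ℕ) : ℤ) := EAux_lt C _ (by omega)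
          have h2 : 0 ≤ EAux C R := EAux_nonneg C R
          have h3 : ((n ^ m : ℕ) : ℤ) = (n : ℤ) ^ m := by push_cast; ring
          omega
        have bc : ∀ g w : ℕ, ((C.card - 2 * R : ℕ) : ℤ) * (n : ℤ) ^ g ≤ X →
            X ≤ (n : ℤ) ^ w → w ≤ g + 1 → False := by
          intro g w hg hw hwg
          have h1 : ((C.card - 2 * R : ℕ) : ℤ) * (n : ℤ) ^ g ≤ (n : ℤ) ^ (g + 1) :=
            le_trans hg (le_trans hw
              (pow_le_pow_right₀ (by exact_mod_cast (by omega : 1 ≤ n)) hwg))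
          have hpos : (0 : ℤ) < (n : ℤ) ^ g := by positivity
          have h2 : ((C.card - 2 * R : ℕ) : ℤ) ≤ (n : ℤ) := by
            have h1' : (n : ℤ) ^ g * ((C.card - 2 * R : ℕ) : ℤ) ≤ (n : ℤ) ^ g * (n : ℤ) := by
              calc (n : ℤ) ^ g * ((C.card - 2 * R : ℕ) : ℤ)
                  = ((C.card - 2 * R : ℕ) : ℤ) * (n : ℤ) ^ g := mul_comm _ _
                _ ≤ (n : ℤ) ^ (g + 1) := h1
                _ = (n : ℤ) ^ g * (n : ℤ) := pow_succ _ _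
            exact le_of_mul_le_mul_left h1' hpos
          have h3 : C.card - 2 * R ≤ n := by exact_mod_cast h2
          have h4 : 2 * n ≤ R * n := Nat.mul_le_mul_right n hR2
          omega
        have claim : ∀ t, t ≤ k → ∃ g : ℕ, SnAux k r t ≤ g ∧
            ((C.card - 2 * R : ℕ) : ℤ) * (n : ℤ) ^ g ≤ X := by
          intro t
          induction t with
          | zero =>
            intro _
            refine ⟨0, by simp [SnAux], by simpa using base_gap⟩
          | succ t ih =>
            intro htk
            obtain ⟨g, hg1, hg2⟩ := ih (by omega)
            have htk' : t < k := by omega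
            have hSn : SnAux k r (t + 1) = SnAux k r t + (r ⟨t, htk'⟩ - 1) := by
              unfold SnAux
              rw [Finset.sum_range_succ]
              congr 1
              unfold rrAux
              rw [dif_pos htk']
            have hlv : ((⟨t, htk'⟩ : Fin k) : ℕ) = t := rfl
            by_cases hr1 : r ⟨t, htk'⟩ = 1
            · refine ⟨g, ?_, hg2⟩
              rw [hSn, hr1]
              omega
            · have hrl2 : 2 ≤ r ⟨t, htk'⟩ := by have := hr ⟨t, htk'⟩; omega
              by_cases hjtop : j ⟨t, htk'⟩ = r ⟨t, htk'⟩ - 1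
              · refine ⟨SnAux k r t + j ⟨t, htk'⟩, by rw [hSn]; omega, ?_⟩
                have h5 := gapX ⟨t, htk'⟩ (by omega)
                rw [hlv] at h5
                exact h5
              · have hjw : j ⟨t, htk'⟩ + 1 < r ⟨t, htk'⟩ := by
                  have := hjlt ⟨t, htk'⟩; omega
                have hw := hwin ⟨t, htk'⟩ hjw
                rw [hlv] at hw
                by_cases hj0 : 1 ≤ j ⟨t, htk'⟩
                · have h5 := gapX ⟨t, htk'⟩ hj0
                  rw [hlv] at h5
                  exact (bc _ _ h5 hw le_rfl).elim
                · have hj0' : j ⟨t, htk'⟩ = 0 := by omega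
                  exact (bc g _ hg2 hw (by rw [hj0']; omega)).elim
        obtain ⟨g, hg1, hg2⟩ := claim k le_rfl
        have hSnk : SnAux k r k + k = R := SnAux_last k r hr
        exact bc g m hg2 winm (by omega)
      push_cast
      exact_mod_cast hmain
end

section
/- Every r-uniform semi-linear hypergraph of complexity (d,m) is the Boolean combination of 2m primitive semi-linear hypergraphs. -/
/-- A vertex-ordered `r`-uniform hypergraph on `[N]` (given by its edge predicate on
strictly increasing `r`-tuples) is semi-linear of complexity `(d,m)`: there are points
`p₁,…,p_N ∈ ℝ^d`, `m` linear (degree at most 1) polynomials on `(ℝ^d)^r` given by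
coefficients `a` and constant terms `b`, and a Boolean function `Φ` of the sign pattern,
determining the edges. -/
def IsSemiLinear {r N : ℕ} (d m : ℕ) (H : (Fin r → Fin N) → Prop) : Prop :=
  ∃ (p : Fin N → Fin d → ℝ) (a : Fin m → Fin r → Fin d → ℝ) (b : Fin m → ℝ)
    (Φ : (Fin m → SignType) → Prop),
    ∀ q : Fin r → Fin N, StrictMono q →
      (H q ↔ Φ (fun l => SignType.sign (b l + ∑ i, ∑ j, a l i j * p (q i) j)))

/-- A hypergraph is primitive semi-linear if there is a matrix `P ∈ ℝ^(r×N)` such that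
an increasing tuple `q₁ < ⋯ < q_r` is an edge iff `Σ_i P(i, q_i) < 0`. -/
def IsPrimitiveSemiLinear {r N : ℕ} (H : (Fin r → Fin N) → Prop) : Prop :=
  ∃ P : Fin r → Fin N → ℝ, ∀ q : Fin r → Fin N, StrictMono q →
    (H q ↔ ∑ i, P i (q i) < 0)

/-- `H` is a Boolean combination of `k` primitive semi-linear hypergraphs on the same
ordered vertex set. -/
def IsBooleanCombOfPrimitive {r N : ℕ} (k : ℕ) (H : (Fin r → Fin N) → Prop) : Prop :=
  ∃ Hs : Fin k → ((Fin r → Fin N) → Prop),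
    (∀ l, IsPrimitiveSemiLinear (Hs l)) ∧
    ∃ φ : (Fin k → Prop) → Prop,
      ∀ q : Fin r → Fin N, StrictMono q → (H q ↔ φ (fun l => Hs l q))

/-- Every `r`-uniform semi-linear hypergraph of complexity `(d,m)` is the Boolean
combination of `2m` primitive semi-linear hypergraphs. -/
theorem semiLinear_boolean_comb_primitive {r N d m : ℕ} (H : (Fin r → Fin N) → Prop)
    (hH : IsSemiLinear d m H) : IsBooleanCombOfPrimitive (2 * m) H := by
  classical
  obtain ⟨p, a, b, Φ, hΦ⟩ := hH
  rcases Nat.eq_zero_or_pos r with hr | hr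
  · subst hr
    refine ⟨fun _ _ => False, fun k => ⟨fun _ _ => 0, fun q hq => by simp⟩,
      fun g => Φ (fun l => SignType.sign (b l)), fun q hq => ?_⟩
    rw [hΦ q hq]
    simp
  · have hhalf : ∀ k : Fin (2 * m), k.val / 2 < m := fun k => by omega
    set i0 : Fin r := ⟨0, hr⟩ with hi0
    set P : Fin (2 * m) → Fin r → Fin N → ℝ := fun k i n =>
      (if k.val % 2 = 0 then (1 : ℝ) else -1) *
        ((∑ j, a ⟨k.val / 2, hhalf k⟩ i j * p n j)
          + if i = i0 then b ⟨k.val / 2, hhalf k⟩ else 0) with hP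
    have hsum : ∀ (k : Fin (2 * m)) (q : Fin r → Fin N),
        ∑ i, P k i (q i) = (if k.val % 2 = 0 then (1 : ℝ) else -1) *
          (b ⟨k.val / 2, hhalf k⟩ + ∑ i, ∑ j, a ⟨k.val / 2, hhalf k⟩ i j * p (q i) j) := by
      intro k q
      rw [hP]
      rw [← Finset.mul_sum]
      congr 1
      rw [Finset.sum_add_distrib, Finset.sum_ite_eq' Finset.univ i0]
      simp [add_comm]
    refine ⟨fun k q => ∑ i, P k i (q i) < 0, fun k => ⟨P k, fun q hq => Iff.rfl⟩,
      fun g => Φ (fun l => if g ⟨2 * l.val, by omega⟩ then -1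
        else if g ⟨2 * l.val + 1, by omega⟩ then 1 else 0),
      fun q hq => ?_⟩
    rw [hΦ q hq]
    have key : (fun l => SignType.sign (b l + ∑ i, ∑ j, a l i j * p (q i) j))
        = (fun l : Fin m => if (∑ i, P ⟨2 * l.val, by omega⟩ i (q i)) < 0 then (-1 : SignType)
            else if (∑ i, P ⟨2 * l.val + 1, by omega⟩ i (q i)) < 0 then 1 else 0) := by
      funext l
      rw [hsum, hsum]
      have h1 : (2 * l.val) % 2 = 0 := by omega
      have h2 : ¬ ((2 * l.val + 1) % 2 = 0) := by omega
      have h3 : ∀ h : (2 * l.val) / 2 < m, (⟨(2 * l.val) / 2, h⟩ : Fin m) = l := by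
        intro h; apply Fin.ext; simp only [Fin.val_mk]; omega
      have h4 : ∀ h : (2 * l.val + 1) / 2 < m, (⟨(2 * l.val + 1) / 2, h⟩ : Fin m) = l := by
        intro h; apply Fin.ext; simp only [Fin.val_mk]; omega
      rw [if_pos h1, if_neg h2, h3, h4, one_mul, neg_one_mul]
      set x : ℝ := b l + ∑ i, ∑ j, a l i j * p (q i) j with hx
      rcases lt_trichotomy x 0 with h | h | h
      · rw [if_pos h]
        exact sign_neg h
      · simp [h]
      · rw [if_neg (asymm h), if_pos (neg_lt_zero.mpr h)]
        exact sign_pos h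
    rw [key]
end

section
/- Fix integers r = 2q+2 with q ≥ 1, and reals s₁ > s₂ > ⋯ > s_q ≥ 10^6. Define t₀ = 1 and t_i = s_i t_{i−1}, and let H be the r-uniform hypergraph on [N] (with N > s₁) in which an increasing r-tuple (x₀,…,x_q,y_q,…,y₀) is an edge iff Σ_{i=0}^q (−1)^i t_i (y_i − x_i) > 0. Then the independence number of H satisfies α(H) ≤ 10·(s_q + 2 + Σ_{i=1}^{⌊q/2⌋} (log s_{2i−1})/(log s_{2i})). -/
/-!
Enumerate `C` as `c 0 < ⋯ < c (n-1)` and let `R j = c (n-1-j) - c j` be the width of the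
`j`-th pair from the outside. Independence says that every chain `x₀ < ⋯ < x_q < y_q < ⋯ < y₀`
of `C` has a nonpositive alternating sum. Splitting off the outermost pair, every chain of depth
`q - 1` among the inner points, weighted by `s₂, s₃, …`, has sum at least `δ = R 0 / s₁`, and
the inner points span at most `s₁ δ`.

Such a lower bound propagates inwards. At depth `0` consecutive points are `δ` apart, so there
are at most `2 s₀ + 1` of them. At larger depth the nested chains give `R j - s₁ R (j+1) ≥ δ` up
to deeper terms, so the widths can shrink by a factor `s₁ / 2` for at most `log_{s₁/2} (2 s₀)`
consecutive pairs. At the first pair `J` where this fails, the chains two levels deeper, inside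
`(c (J+1), c (n-2-J))`, again have sums bounded below by a positive constant, with the spread of
those points controlled by it, and induction on the depth applies. Finally
`2 log_{s₁/2} (2 s₀) + 6 ≤ 10 log s₀ / log s₁` once `s₀ ≥ s₁ ≥ 8`.
-/

open Finset Real

namespace AlternatingChain

noncomputable section

def chainSum (s : ℕ → ℝ) (p : ℕ) (c : ℕ → ℝ) (a b : ℕ → ℕ) : ℝ :=
  ∑ i ∈ range (p + 1), (-1) ^ i * (∏ j ∈ Icc 1 i, s j) * (c (b i) - c (a i))

lemma prod_Icc_one_succ (s : ℕ → ℝ) (i : ℕ) :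
    ∏ j ∈ Icc 1 (i + 1), s j = s 1 * ∏ j ∈ Icc 1 i, s (j + 1) := by
  rw [← Ico_add_one_right_eq_Icc, prod_eq_prod_Ico_succ_bot (by omega), ← Ico_add_one_right_eq_Icc,
    prod_Ico_add']

lemma chainSum_zero (s : ℕ → ℝ) (c : ℕ → ℝ) (a b : ℕ → ℕ) :
    chainSum s 0 c a b = c (b 0) - c (a 0) := by
  simp [chainSum]

def prepend (x : ℕ) (a : ℕ → ℕ) : ℕ → ℕ
  | 0 => x
  | i + 1 => a i

lemma chainSum_prepend (s : ℕ → ℝ) (p : ℕ) (c : ℕ → ℝ) (x y : ℕ) (a b : ℕ → ℕ) :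
    chainSum s (p + 1) c (prepend x a) (prepend y b) =
      c y - c x - s 1 * chainSum (fun j => s (j + 1)) p c a b := by
  unfold chainSum
  have hterm : ∀ i, (-1 : ℝ) ^ (i + 1) * (∏ j ∈ Icc 1 (i + 1), s j) *
      (c (prepend y b (i + 1)) - c (prepend x a (i + 1))) =
        -(s 1 * ((-1) ^ i * (∏ j ∈ Icc 1 i, s (j + 1)) * (c (b i) - c (a i)))) := fun i => by
    rw [prod_Icc_one_succ, pow_succ]
    simp only [prepend]
    ring
  rw [sum_range_succ' _ (p + 1), mul_sum]
  simp only [hterm, sum_neg_distrib]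
  simp [prepend]
  ring

lemma chainSum_add_const (s : ℕ → ℝ) (p : ℕ) (c : ℕ → ℝ) (a b : ℕ → ℕ) (d : ℕ) :
    chainSum s p c (fun i => a i + d) (fun i => b i + d) = chainSum s p (fun i => c (i + d)) a b :=
  rfl

structure IsChain (n p : ℕ) (a b : ℕ → ℕ) : Prop where
  lt_succ : ∀ i < p, a i < a (i + 1)
  lt_right : a p < b p
  succ_lt : ∀ i < p, b (i + 1) < b i
  lt_length : b 0 < n

namespace IsChain

variable {n p : ℕ} {a b : ℕ → ℕ}

lemma zero {x y : ℕ} (hxy : x < y) (hy : y < n) : IsChain n 0 (fun _ => x) (fun _ => y) :=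
  ⟨fun _ h => absurd h (Nat.not_lt_zero _), hxy, fun _ h => absurd h (Nat.not_lt_zero _), hy⟩

lemma prepend {m x y : ℕ} (h : IsChain m p a b) (hx : x < a 0) (hy : b 0 < y) (hyn : y < n) :
    IsChain n (p + 1) (prepend x a) (prepend y b) where
  lt_succ i hi := by
    cases i with
    | zero => exact hx
    | succ i => exact h.lt_succ i (by omega)
  lt_right := h.lt_right
  succ_lt i hi := by
    cases i with
    | zero => exact hy
    | succ i => exact h.succ_lt i (by omega)
  lt_length := hyn

lemma add_const (h : IsChain n p a b) (d : ℕ) :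
    IsChain (n + d) p (fun i => a i + d) (fun i => b i + d) where
  lt_succ i hi := by simpa using h.lt_succ i hi
  lt_right := by simpa using h.lt_right
  succ_lt i hi := by simpa using h.succ_lt i hi
  lt_length := by simpa using h.lt_length

end IsChain

-- the chain as the increasing tuple `a 0, …, a p, b p, …, b 0`
def interleave (p : ℕ) (a b : ℕ → ℕ) (i : ℕ) : ℕ := if i ≤ p then a i else b (2 * p + 1 - i)

lemma IsChain.strictMonoOn_interleave {n p : ℕ} {a b : ℕ → ℕ} (h : IsChain n p a b) :
    StrictMonoOn (interleave p a b) (Set.Iic (2 * p + 1)) := by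
  refine strictMonoOn_Iic_of_lt_succ fun i hi => ?_
  simp only [interleave, Order.succ_eq_add_one]
  rcases lt_trichotomy i p with hip | rfl | hpi
  · rw [if_pos hip.le, if_pos (show i + 1 ≤ p by omega)]
    exact h.lt_succ i hip
  · rw [if_pos le_rfl, if_neg (by omega), show 2 * i + 1 - (i + 1) = i by omega]
    exact h.lt_right
  · rw [if_neg (by omega), if_neg (by omega), show 2 * p + 1 - i = 2 * p - i + 1 by omega,
      show 2 * p + 1 - (i + 1) = 2 * p - i by omega]
    exact h.succ_lt _ (by omega)

def IsIndependent (q : ℕ) (s : ℕ → ℝ) (C : Finset ℕ) : Prop :=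
  ∀ a : ℕ → ℕ, (∀ i j, i < j → j < 2 * q + 2 → a i < a j) → (∀ i, i < 2 * q + 2 → a i ∈ C) →
    ¬ (0 < ∑ i ∈ range (q + 1),
      (-1 : ℝ) ^ i * (∏ j ∈ Icc 1 i, s j) * ((a (2 * q + 1 - i) : ℝ) - (a i : ℝ)))

lemma IsIndependent.chainSum_nonpos {q n : ℕ} {s : ℕ → ℝ} {C : Finset ℕ} {c a b : ℕ → ℕ}
    (hC : IsIndependent q s C) (hc : StrictMono c) (hcC : ∀ i < n, c i ∈ C)
    (h : IsChain n q a b) : chainSum s q (fun i => (c i : ℝ)) a b ≤ 0 := by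
  have hmono := h.strictMonoOn_interleave
  have hlt : ∀ i < 2 * q + 2, interleave q a b i < n := fun i hi => by
    have hlast : interleave q a b (2 * q + 1) = b 0 := by
      simp only [interleave, if_neg (show ¬ 2 * q + 1 ≤ q by omega), Nat.sub_self]
    refine lt_of_le_of_lt ?_ (hlast ▸ h.lt_length)
    exact hmono.monotoneOn (Set.mem_Iic.2 (by omega)) (Set.mem_Iic.2 le_rfl) (by omega)
  have hsum := hC (fun i => c (interleave q a b i))
    (fun i j hij hj => hc (hmono (Set.mem_Iic.2 (by omega)) (Set.mem_Iic.2 (by omega)) hij))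
    (fun i hi => hcC _ (hlt i hi))
  refine le_of_eq_of_le ?_ (not_lt.1 hsum)
  refine sum_congr rfl fun i hi => ?_
  have hi : i ≤ q := Nat.lt_succ_iff.1 (mem_range.1 hi)
  simp only [interleave, if_pos hi, if_neg (show ¬ 2 * q + 1 - i ≤ q by omega),
    show 2 * q + 1 - (2 * q + 1 - i) = i by omega]

lemma exists_strictMono_forall_mem (C : Finset ℕ) :
    ∃ c : ℕ → ℕ, StrictMono c ∧ ∀ i < #C, c i ∈ C := by
  let e := C.orderEmbOfFin rfl
  have he : ∀ i, e i ≤ C.sup id := fun i => le_sup (f := id) (C.orderEmbOfFin_mem rfl i)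
  refine ⟨fun i => if h : i < #C then e ⟨i, h⟩ else C.sup id + i, strictMono_nat_of_lt_succ
    fun i => ?_, fun i hi => by simp only [dif_pos hi]; exact C.orderEmbOfFin_mem rfl _⟩
  by_cases hi : i + 1 < #C
  · simp only [dif_pos hi, dif_pos (show i < #C by omega)]
    exact e.strictMono (Fin.mk_lt_mk.2 (Nat.lt_succ_self i))
  · simp only [dif_neg hi]
    split_ifs
    · exact (he _).trans_lt (by omega)
    · omega

def gap (c : ℕ → ℝ) (n j : ℕ) : ℝ := c (n - 1 - j) - c j

section Gap

variable {c : ℕ → ℝ} {n j : ℕ}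

lemma gap_pos (hc : StrictMono c) (h : 2 * j + 2 ≤ n) : 0 < gap c n j :=
  sub_pos.2 (hc (by omega))

lemma gap_succ_le (hc : Monotone c) : gap c n (j + 1) ≤ gap c n j :=
  sub_le_sub (hc (by omega)) (hc (by omega))

lemma gap_nonneg (hc : Monotone c) (h : 2 * j + 1 ≤ n) : 0 ≤ gap c n j :=
  sub_nonneg.2 (hc (by omega))

end Gap

lemma pow_mul_le_of_mul_succ_le {r : ℕ → ℝ} {x : ℝ} (hx : 0 ≤ x) :
    ∀ {T : ℕ}, (∀ j < T, x * r (j + 1) ≤ r j) → x ^ T * r T ≤ r 0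
  | 0, _ => by simp
  | T + 1, h =>
    calc x ^ (T + 1) * r (T + 1) = x ^ T * (x * r (T + 1)) := by ring
      _ ≤ x ^ T * r T := mul_le_mul_of_nonneg_left (h T (by omega)) (by positivity)
      _ ≤ r 0 := pow_mul_le_of_mul_succ_le hx fun j hj => h j (by omega)

lemma natCast_le_logb_of_mul_succ_le {r : ℕ → ℝ} {x y δ : ℝ} {T : ℕ} (hx : 1 < x) (hδ : 0 < δ)
    (hstep : ∀ j < T, x * r (j + 1) ≤ r j) (hT : δ ≤ r T) (h0 : r 0 ≤ y * δ) :
    (T : ℝ) ≤ logb x y := by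
  have hxT : x ^ T ≤ y := by
    refine le_of_mul_le_mul_right ?_ hδ
    calc x ^ T * δ ≤ x ^ T * r T := mul_le_mul_of_nonneg_left hT (by positivity)
      _ ≤ r 0 := pow_mul_le_of_mul_succ_le (by linarith) hstep
      _ ≤ y * δ := h0
  rwa [le_logb_iff_rpow_le hx ((pow_pos (by linarith) T).trans_le hxT), rpow_natCast]

def ChainSumsGe (s : ℕ → ℝ) (p n : ℕ) (c : ℕ → ℝ) (δ : ℝ) : Prop :=
  ∀ a b, IsChain n p a b → δ ≤ chainSum s p c a b

def chainBound : ℕ → (ℕ → ℝ) → ℝ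
  | 0, s => 2 * s 0 + 1
  | 1, s => 2 * logb (s 1) (2 * s 0) + 5
  | p + 2, s => 2 * logb (s 1 / 2) (2 * s 0) + 6 + chainBound p (fun j => s (j + 2))

lemma one_le_chainBound : ∀ (p : ℕ) {s : ℕ → ℝ}, (∀ j ≤ p, 2 < s j) → 1 ≤ chainBound p s
  | 0, s, hs => by
    simp only [chainBound]
    linarith [hs 0 le_rfl]
  | 1, s, hs => by
    have := logb_nonneg (b := s 1) (x := 2 * s 0) (by linarith [hs 1 le_rfl])
      (by linarith [hs 0 (by omega)])
    simp only [chainBound]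
    linarith
  | p + 2, s, hs => by
    have := logb_nonneg (b := s 1 / 2) (x := 2 * s 0) (by linarith [hs 1 (by omega)])
      (by linarith [hs 0 (by omega)])
    have := one_le_chainBound p (s := fun j => s (j + 2)) fun j hj => hs (j + 2) (by omega)
    simp only [chainBound]
    linarith

lemma natCast_le_chainBound_zero {s c : ℕ → ℝ} {n : ℕ} {δ : ℝ} (hδ : 0 < δ)
    (h : ChainSumsGe s 0 n c δ) (hspan : gap c n 0 ≤ 2 * s 0 * δ) :
    (n : ℝ) ≤ chainBound 0 s := by
  have hgaps : ∀ i ∈ range (n - 1), δ ≤ c (i + 1) - c i := fun i hi => by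
    simpa [chainSum_zero] using h _ _ (IsChain.zero (Nat.lt_succ_self i) (by simp at hi; omega))
  have hsum := card_nsmul_le_sum _ _ _ hgaps
  rw [sum_range_sub, card_range, nsmul_eq_mul] at hsum
  have hn : ((n - 1 : ℕ) : ℝ) ≤ 2 * s 0 :=
    le_of_mul_le_mul_right (hsum.trans (by simpa [gap] using hspan)) hδ
  have : (n : ℝ) ≤ (n - 1 : ℕ) + 1 := by exact_mod_cast (by omega : n ≤ n - 1 + 1)
  simp only [chainBound]
  linarith

lemma le_gap_sub_mul_gap {s c : ℕ → ℝ} {n j : ℕ} {δ : ℝ} (h : ChainSumsGe s 1 n c δ)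
    (hj : 2 * j + 4 ≤ n) : δ ≤ gap c n j - s 1 * gap c n (j + 1) := by
  have := h _ _ ((IsChain.zero (n := n) (x := j + 1) (y := n - 2 - j) (by omega) (by omega)).prepend
    (x := j) (y := n - 1 - j) (by omega) (by omega) (by omega))
  rwa [chainSum_prepend, chainSum_zero, show n - 2 - j = n - 1 - (j + 1) by omega] at this

lemma natCast_le_chainBound_one {s c : ℕ → ℝ} {n : ℕ} {δ : ℝ} (hs : ∀ j ≤ 1, 2 < s j)
    (hc : StrictMono c) (hδ : 0 < δ) (h : ChainSumsGe s 1 n c δ)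
    (hspan : gap c n 0 ≤ 2 * s 0 * δ) : (n : ℝ) ≤ chainBound 1 s := by
  have hs0 := hs 0 (by omega)
  have hs1 := hs 1 le_rfl
  have hlog : 0 ≤ logb (s 1) (2 * s 0) := logb_nonneg (by linarith) (by linarith)
  simp only [chainBound]
  rcases le_or_gt n 5 with hn | hn
  · have : (n : ℝ) ≤ 5 := by exact_mod_cast hn
    linarith
  set T := n / 2 - 2
  have hT : (T : ℝ) ≤ logb (s 1) (2 * s 0) := by
    refine natCast_le_logb_of_mul_succ_le (r := gap c n) (by linarith) hδ
      (fun j hj => by linarith [le_gap_sub_mul_gap h (j := j) (by omega)]) ?_ hspan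
    have := le_gap_sub_mul_gap h (j := T) (by omega)
    nlinarith [gap_nonneg hc.monotone (c := c) (n := n) (j := T + 1) (by omega)]
  have : (n : ℝ) ≤ 2 * T + 5 := by exact_mod_cast (by omega : n ≤ 2 * T + 5)
  linarith

lemma natCast_le_logb_add_one {s c : ℕ → ℝ} {n J : ℕ} {δ : ℝ} (hs0 : 1 ≤ 2 * s 0)
    (hs1 : 2 < s 1) (hδ : 0 < δ) (hspan : gap c n 0 ≤ 2 * s 0 * δ)
    (hgrow : ∀ j < J, δ < gap c n j ∧ s 1 * gap c n (j + 1) ≤ 2 * gap c n j) :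
    (J : ℝ) ≤ logb (s 1 / 2) (2 * s 0) + 1 := by
  cases J with
  | zero => simpa using (logb_nonneg (by linarith) hs0).trans (le_add_of_nonneg_right zero_le_one)
  | succ T =>
    have := natCast_le_logb_of_mul_succ_le (r := gap c n) (x := s 1 / 2) (T := T) (by linarith) hδ
      (fun j hj => by linarith [(hgrow j (by omega)).2]) (hgrow T (by omega)).1.le hspan
    push_cast
    linarith

lemma exists_chainSumsGe_inner {s c : ℕ → ℝ} {n p J : ℕ} {δ : ℝ} (hs1 : 0 < s 1) (hs2 : 0 < s 2)
    (hc : StrictMono c) (hδ : 0 < δ) (hn : 2 * J + 6 ≤ n)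
    (hstop : gap c n J ≤ δ ∨ 2 * gap c n J < s 1 * gap c n (J + 1))
    (h : ChainSumsGe s (p + 2) n c δ) :
    ∃ δ' > 0, ChainSumsGe (fun j => s (j + 2)) p (n - 2 * J - 4) (fun i => c (i + (J + 2))) δ' ∧
      gap (fun i => c (i + (J + 2))) (n - 2 * J - 4) 0 ≤ 2 * s 2 * δ' := by
  have hpos := gap_pos hc (n := n) (j := J + 1) (by omega)
  have hmono : gap c n (J + 2) ≤ gap c n (J + 1) := gap_succ_le hc.monotone
  have hnum : s 1 * gap c n (J + 1) / 2 ≤ δ - gap c n J + s 1 * gap c n (J + 1) := by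
    rcases hstop with hle | hlt <;> nlinarith
  refine ⟨(δ - gap c n J + s 1 * gap c n (J + 1)) / (s 1 * s 2),
    div_pos (by nlinarith) (mul_pos hs1 hs2), ?_, ?_⟩
  · intro a b hab
    have hb := hab.lt_length
    have hinner : IsChain (n - 1 - J) (p + 1) (prepend (J + 1) fun i => a i + (J + 2))
        (prepend (n - 2 - J) fun i => b i + (J + 2)) :=
      (hab.add_const (J + 2)).prepend (by omega) (by omega) (by omega)
    have key := h _ _ (hinner.prepend (show J < J + 1 by omega)
      (show n - 2 - J < n - 1 - J by omega) (by omega))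
    rw [chainSum_prepend, chainSum_prepend, chainSum_add_const] at key
    rw [div_le_iff₀ (mul_pos hs1 hs2)]
    simp only [gap, show n - 1 - (J + 1) = n - 2 - J by omega]
    linarith
  · have hinner : gap (fun i => c (i + (J + 2))) (n - 2 * J - 4) 0 = gap c n (J + 2) := by
      simp only [gap, show n - 2 * J - 4 - 1 - 0 + (J + 2) = n - 1 - (J + 2) by omega, zero_add]
    have key : s 1 * gap c n (J + 2) ≤ 2 * (δ - gap c n J + s 1 * gap c n (J + 1)) := by
      nlinarith [mul_le_mul_of_nonneg_left hmono hs1.le]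
    rw [hinner, mul_div_assoc', le_div_iff₀ (mul_pos hs1 hs2)]
    linarith [mul_le_mul_of_nonneg_left key hs2.le]

-- `s` is indexed from the current level: `s 0` scales the spread, `s 1, s 2, …` weight the chains.
theorem natCast_le_chainBound : ∀ (p : ℕ) {s c : ℕ → ℝ} {n : ℕ} {δ : ℝ}, (∀ j ≤ p, 2 < s j) →
    StrictMono c → 0 < δ → ChainSumsGe s p n c δ → gap c n 0 ≤ 2 * s 0 * δ →
    (n : ℝ) ≤ chainBound p s
  | 0, _, _, _, _, _, _, hδ, h, hspan => natCast_le_chainBound_zero hδ h hspan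
  | 1, _, _, _, _, hs, hc, hδ, h, hspan => natCast_le_chainBound_one hs hc hδ h hspan
  | p + 2, s, c, n, δ, hs, hc, hδ, h, hspan => by
    classical
    have hstop : ∃ J, n < 2 * J + 6 ∨ gap c n J ≤ δ ∨ 2 * gap c n J < s 1 * gap c n (J + 1) :=
      ⟨n, by omega⟩
    -- the first pair at which the widths stop shrinking by the factor `s 1 / 2`
    set J := Nat.find hstop
    have hgrow : ∀ j < J, 2 * j + 6 ≤ n ∧ δ < gap c n j ∧ s 1 * gap c n (j + 1) ≤ 2 * gap c n j :=
      fun j hj => by simpa only [not_or, not_lt, not_le] using Nat.find_min hstop hj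
    have hJ := natCast_le_logb_add_one (by linarith [hs 0 (by omega)]) (hs 1 (by omega)) hδ hspan
      fun j hj => (hgrow j hj).2
    have hrest := one_le_chainBound p (s := fun j => s (j + 2)) fun j hj => hs (j + 2) (by omega)
    simp only [chainBound]
    rcases lt_or_ge n (2 * J + 6) with hn | hn
    · have : (n : ℝ) ≤ 2 * J + 5 := by exact_mod_cast (by omega : n ≤ 2 * J + 5)
      linarith
    obtain ⟨δ', hδ', h', hspan'⟩ := exists_chainSumsGe_inner (by linarith [hs 1 (by omega)])
      (by linarith [hs 2 le_add_self]) hc hδ hn ((Nat.find_spec hstop).resolve_left (by omega)) h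
    have hinner := natCast_le_chainBound p (fun j hj => hs (j + 2) (by omega))
      (fun i j hij => hc (by omega)) hδ' h' hspan'
    have : (n : ℝ) = (n - 2 * J - 4 : ℕ) + 2 * J + 4 := by
      rw [Nat.cast_sub (by omega), Nat.cast_sub (by omega)]
      push_cast
      ring
    linarith

lemma exists_chainSumsGe_tail {s c : ℕ → ℝ} {n p : ℕ} (hs1 : 0 < s 1) (hc : StrictMono c)
    (hn : 2 ≤ n) (h : ∀ a b, IsChain n (p + 1) a b → chainSum s (p + 1) c a b ≤ 0) :
    ∃ δ > 0, ChainSumsGe (fun j => s (j + 1)) p (n - 2) (fun i => c (i + 1)) δ ∧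
      gap (fun i => c (i + 1)) (n - 2) 0 ≤ 2 * s 1 * δ := by
  have hD := gap_pos hc (n := n) (j := 0) (by omega)
  refine ⟨gap c n 0 / s 1, div_pos hD hs1, fun a b hab => ?_, ?_⟩
  · have hb := hab.lt_length
    have key := h _ _ ((hab.add_const 1).prepend (x := 0) (y := n - 1) (by omega) (by omega)
      (by omega))
    rw [chainSum_prepend, chainSum_add_const] at key
    rw [div_le_iff₀ hs1]
    simp only [gap, Nat.sub_zero]
    linarith
  · have hinner : gap (fun i => c (i + 1)) (n - 2) 0 ≤ gap c n 0 :=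
      sub_le_sub (hc.monotone (by omega)) (hc.monotone (by omega))
    rw [mul_div_assoc', mul_div_right_comm, mul_div_cancel_right₀ _ hs1.ne']
    linarith

theorem card_le_chainBound_add_two {p : ℕ} {s : ℕ → ℝ} {C : Finset ℕ}
    (hs : ∀ j ≤ p, 2 < s (j + 1)) (hC : IsIndependent (p + 1) s C) :
    (#C : ℝ) ≤ chainBound p (fun j => s (j + 1)) + 2 := by
  obtain ⟨c, hc, hcC⟩ := exists_strictMono_forall_mem C
  have hbound := one_le_chainBound p hs
  rcases le_or_gt #C 1 with hn | hn
  · have : (#C : ℝ) ≤ 1 := by exact_mod_cast hn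
    linarith
  have hcR : StrictMono fun i => (c i : ℝ) := Nat.strictMono_cast.comp hc
  obtain ⟨δ, hδ, h, hspan⟩ := exists_chainSumsGe_tail (by linarith [hs 0 (Nat.zero_le _)]) hcR hn
    fun a b hab => hC.chainSum_nonpos hc hcC hab
  have := natCast_le_chainBound p hs (fun i j hij => hcR (by omega)) hδ h hspan
  have : (#C : ℝ) ≤ (#C - 2 : ℕ) + 2 := by exact_mod_cast (by omega : #C ≤ #C - 2 + 2)
  linarith

lemma two_mul_logb_add_five_le {x y : ℝ} (hy : 2 ≤ y) (hyx : y ≤ x) :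
    2 * logb y (2 * x) + 5 ≤ 10 * logb y x := by
  have hlog2 : log 2 ≤ log y := log_le_log two_pos hy
  have h2 : logb y 2 ≤ 1 := (div_le_one (lt_of_lt_of_le (log_pos one_lt_two) hlog2)).2 hlog2
  have hx : 1 ≤ logb y x := (le_logb_iff_rpow_le (by linarith) (by linarith)).2 (by rwa [rpow_one])
  rw [logb_mul two_ne_zero (by linarith)]
  linarith

lemma two_mul_logb_half_add_six_le {x y : ℝ} (hy : 8 ≤ y) (hyx : y ≤ x) :
    2 * logb (y / 2) (2 * x) + 6 ≤ 10 * logb y x := by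
  have hl := log_pos one_lt_two
  have hlog8 : 3 * log 2 ≤ log y :=
    calc 3 * log 2 = log (2 ^ 3) := by rw [log_pow]; norm_num
      _ ≤ log y := log_le_log (by norm_num) (by linarith)
  have hhalf : 2 / 3 * log y ≤ log (y / 2) := by
    rw [log_div (by linarith) two_ne_zero]
    linarith
  have h2 : logb y 2 ≤ 1 / 3 := by
    rw [logb, div_le_iff₀ (by linarith)]
    linarith
  have hx : 1 ≤ logb y x := (le_logb_iff_rpow_le (by linarith) (by linarith)).2 (by rwa [rpow_one])
  have hshrink : logb (y / 2) (2 * x) ≤ 3 / 2 * logb y (2 * x) :=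
    calc log (2 * x) / log (y / 2) ≤ log (2 * x) / (2 / 3 * log y) :=
          div_le_div_of_nonneg_left (log_nonneg (by linarith)) (by linarith) hhalf
      _ = 3 / 2 * logb y (2 * x) := by rw [logb]; field_simp
  have hsplit : logb y (2 * x) = logb y 2 + logb y x := logb_mul two_ne_zero (by linarith)
  linarith

theorem chainBound_add_two_le : ∀ (p : ℕ) {s : ℕ → ℝ}, (∀ j ≤ p, 8 ≤ s j) →
    (∀ j < p, s (j + 1) ≤ s j) →
    chainBound p s + 2 ≤ 10 * (s p + 2 + ∑ i ∈ range ((p + 1) / 2), logb (s (2 * i + 1)) (s (2 * i)))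
  | 0, s, hs, _ => by
    simp only [chainBound]
    norm_num
    linarith [hs 0 le_rfl]
  | 1, s, hs, hanti => by
    have := two_mul_logb_add_five_le (by linarith [hs 1 le_rfl]) (hanti 0 one_pos)
    simp only [chainBound]
    norm_num
    linarith [hs 1 le_rfl]
  | p + 2, s, hs, hanti => by
    have hphase := two_mul_logb_half_add_six_le (hs 1 (by omega)) (hanti 0 (by omega))
    have ih := chainBound_add_two_le p (s := fun j => s (j + 2))
      (fun j hj => hs (j + 2) (by omega)) (fun j hj => hanti (j + 2) (by omega))
    have hsum : ∑ i ∈ range ((p + 1) / 2), logb (s (2 * (i + 1) + 1)) (s (2 * (i + 1))) =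
        ∑ i ∈ range ((p + 1) / 2), logb (s (2 * i + 1 + 2)) (s (2 * i + 2)) :=
      sum_congr rfl fun i _ => by rw [show 2 * (i + 1) = 2 * i + 2 by ring, add_right_comm]
    rw [show (p + 2 + 1) / 2 = (p + 1) / 2 + 1 by omega, sum_range_succ', hsum]
    simp only [chainBound] at ih ⊢
    linarith

end

end AlternatingChain

open Finset in
theorem indepNumber_bound_general (q : ℕ) (hq : 1 ≤ q) (s : ℕ → ℝ)
    (hs : ∀ i j, 1 ≤ i → i < j → j ≤ q → s j < s i) (hsq : (10 : ℝ) ^ 6 ≤ s q)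
    (C : Finset ℕ)
    (hindep : ∀ a : ℕ → ℕ,
      (∀ i j, i < j → j < 2 * q + 2 → a i < a j) →
      (∀ i, i < 2 * q + 2 → a i ∈ C) →
      ¬ (0 < ∑ i ∈ Finset.range (q + 1),
        (-1 : ℝ) ^ i * (∏ j ∈ Finset.Icc 1 i, s j) *
          ((a (2 * q + 1 - i) : ℝ) - (a i : ℝ)))) :
    (C.card : ℝ) ≤ 10 * (s q + 2 +
      ∑ i ∈ Finset.Icc 1 (q / 2), Real.log (s (2 * i - 1)) / Real.log (s (2 * i))) := by
  obtain ⟨p, rfl⟩ : ∃ p, q = p + 1 := ⟨q - 1, by omega⟩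
  have hs8 : ∀ j ≤ p, 8 ≤ s (j + 1) := fun j hj => by
    rcases hj.lt_or_eq with hlt | rfl
    · linarith [hs (j + 1) (p + 1) (by omega) (by omega) le_rfl]
    · linarith
  have hsum : ∑ i ∈ Icc 1 ((p + 1) / 2), Real.log (s (2 * i - 1)) / Real.log (s (2 * i)) =
      ∑ i ∈ range ((p + 1) / 2), Real.logb (s (2 * i + 1 + 1)) (s (2 * i + 1)) := by
    rw [← Ico_add_one_right_eq_Icc, sum_Ico_eq_sum_range, Nat.add_sub_cancel]
    refine sum_congr rfl fun i _ => ?_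
    rw [Real.log_div_log, show 2 * (1 + i) - 1 = 2 * i + 1 by omega,
      show 2 * (1 + i) = 2 * i + 1 + 1 by omega]
  rw [hsum]
  calc (#C : ℝ) ≤ AlternatingChain.chainBound p (fun j => s (j + 1)) + 2 :=
        AlternatingChain.card_le_chainBound_add_two (fun j hj => by linarith [hs8 j hj]) hindep
    _ ≤ _ := AlternatingChain.chainBound_add_two_le p hs8
        fun j hj => (hs (j + 1) (j + 2) (by omega) (by omega) (by omega)).le

open Finset in
/-- Let `r = 2q+2` with `q ≥ 1` and `s 1 > ⋯ > s q ≥ 10^6`. With `t i = s 1 ⋯ s i`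
(`t 0 = 1`), let `H` be the `r`-uniform hypergraph on `[N]` (`N > s 1`) in which an
increasing `r`-tuple `(x₀,…,x_q,y_q,…,y₀)` is an edge iff
`Σ_{i=0}^q (-1)^i t i (y i - x i) > 0`. Then
`α(H) ≤ 10 (s q + 2 + Σ_{i=1}^{⌊q/2⌋} log (s (2i-1)) / log (s (2i)))`. -/
theorem indepNumber_bound (q N : ℕ) (hq : 1 ≤ q) (s : ℕ → ℝ)
    (hs : ∀ i j, 1 ≤ i → i < j → j ≤ q → s j < s i) (hsq : (10 : ℝ) ^ 6 ≤ s q)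
    (hN : s 1 < N)
    (C : Finset ℕ) (hC : C ⊆ Finset.Icc 1 N)
    (hindep : ∀ a : ℕ → ℕ,
      (∀ i j, i < j → j < 2 * q + 2 → a i < a j) →
      (∀ i, i < 2 * q + 2 → a i ∈ C) →
      ¬ (0 < ∑ i ∈ Finset.range (q + 1),
        (-1 : ℝ) ^ i * (∏ j ∈ Finset.Icc 1 i, s j) *
          ((a (2 * q + 1 - i) : ℝ) - (a i : ℝ)))) :
    (C.card : ℝ) ≤ 10 * (s q + 2 +
      ∑ i ∈ Finset.Icc 1 (q / 2), Real.log (s (2 * i - 1)) / Real.log (s (2 * i))) :=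
  indepNumber_bound_general q hq s hs hsq C hindep
end
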